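/- arXiv:0910.4172 — 11 statements merged into one kernel-verified Lean document; each statement's English description precedes it below -/
import Mathlib

section
/- Let d ≥ 2, let C be a convex body in ℝ^d, let (b_1,…,b_d) be a basis of ℝ^d, let e_1,…,e_d be real numbers with e_i ≥ 1, and suppose there are points p, q ∈ ℝ^d such that p + {∑_i t_i b_i : t_i ∈ [0,1]} ⊆ C ⊆ q + {∑_i t_i (e_i b_i) : t_i ∈ [0,1]}. Then for every finite family F of translates of C, τ(F) ≤ ⌈e_d⌉ · ∏_{i=1}^{d−1} ⌈e_i + 1⌉ · ν(F). -/
/-!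
In the coordinates of `b`, the translate `v + C` contains every point `p + ∑ cᵢ bᵢ` with
`cᵢ ∈ [vᵢ, vᵢ + 1]`, and two translates are disjoint as soon as the offsets differ by more than
`eᵢ` in some coordinate `i`. Group the offsets into columns by `⌈vᵢ⌉`, `i ≠ d`; inside a column a
greedy one-dimensional argument pierces with `⌈e_d⌉` points per member of a packing. Columns
whose ceilings agree modulo `⌈eᵢ + 1⌉` for all `i ≠ d` are mutually apart, so their packings
combine; of the `∏_{i ≠ d} ⌈eᵢ + 1⌉` residue classes keep the one with the largest packing.
-/

open Pointwise Finset

/-- A certificate of `τ ≤ k · ν` for the family indexed by `S`. -/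
def HasPiercingRatio {π α : Type*} (hit : π → α → Prop) (apart : α → α → Prop) (k : ℕ)
    (S : Finset α) : Prop :=
  ∃ (P : Finset π) (W : Finset α), W ⊆ S ∧ (∀ v ∈ S, ∃ x ∈ P, hit x v) ∧
    (W : Set α).Pairwise apart ∧ #P ≤ k * #W

namespace HasPiercingRatio

variable {π π' α β : Type*} {hit : π → α → Prop} {apart : α → α → Prop} {k : ℕ}
  {S : Finset α}

theorem map {hit' : π' → α → Prop} {apart' : α → α → Prop} (φ : π → π')
    (hhit : ∀ v ∈ S, ∀ x, hit x v → hit' (φ x) v)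
    (hapart : ∀ u ∈ S, ∀ w ∈ S, apart u w → apart' u w)
    (h : HasPiercingRatio hit apart k S) : HasPiercingRatio hit' apart' k S := by
  classical
  obtain ⟨P, W, hWS, hP, hW, hcard⟩ := h
  refine ⟨P.image φ, W, hWS, fun v hv => ?_, ?_, card_image_le.trans hcard⟩
  · obtain ⟨x, hx, hxv⟩ := hP v hv
    exact ⟨φ x, mem_image_of_mem φ hx, hhit v hv x hxv⟩
  · exact fun u hu w hw huw => hapart u (hWS hu) w (hWS hw) (hW hu hw huw)

theorem of_fibers_of_apart [DecidableEq β] (f : α → β)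
    (hfib : ∀ j, HasPiercingRatio hit apart k (S.filter (f · = j)))
    (hapart : ∀ u ∈ S, ∀ w ∈ S, f u ≠ f w → apart u w) :
    HasPiercingRatio hit apart k S := by
  classical
  choose P W hWS hP hW hcard using hfib
  have hfW : ∀ j, ∀ v ∈ W j, v ∈ S ∧ f v = j := fun j v hv => mem_filter.1 (hWS j hv)
  refine ⟨(S.image f).biUnion P, (S.image f).biUnion W, fun v hv => ?_, fun v hv => ?_, ?_, ?_⟩
  · obtain ⟨j, -, hvj⟩ := mem_biUnion.1 hv
    exact (hfW j v hvj).1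
  · obtain ⟨x, hx, hxv⟩ := hP (f v) v (mem_filter.2 ⟨hv, rfl⟩)
    exact ⟨x, mem_biUnion.2 ⟨f v, mem_image_of_mem f hv, hx⟩, hxv⟩
  · intro u hu w hw huw
    obtain ⟨i, -, hui⟩ := mem_biUnion.1 hu
    obtain ⟨j, -, hwj⟩ := mem_biUnion.1 hw
    obtain ⟨huS, rfl⟩ := hfW i u hui
    obtain ⟨hwS, rfl⟩ := hfW j w hwj
    by_cases hij : f u = f w
    · exact hW (f u) hui (hij ▸ hwj) huw
    · exact hapart u huS w hwS hij
  · have hdisj : ((S.image f : Finset β) : Set β).PairwiseDisjoint W := by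
      intro i _ j _ hij
      exact disjoint_left.2 fun v hvi hvj => hij ((hfW i v hvi).2.symm.trans (hfW j v hvj).2)
    calc #((S.image f).biUnion P) ≤ ∑ j ∈ S.image f, #(P j) := card_biUnion_le
      _ ≤ ∑ j ∈ S.image f, k * #(W j) := sum_le_sum fun j _ => hcard j
      _ = k * #((S.image f).biUnion W) := by rw [card_biUnion hdisj, mul_sum]

/-- At most `r` classes: unite the transversals and keep the largest packing. -/
theorem of_fibers [DecidableEq β] (f : α → β) {R : Finset β} {r : ℕ} (hfR : ∀ v ∈ S, f v ∈ R)
    (hR : #R ≤ r) (hfib : ∀ j, HasPiercingRatio hit apart k (S.filter (f · = j))) :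
    HasPiercingRatio hit apart (k * r) S := by
  classical
  choose P W hWS hP hW hcard using hfib
  rcases R.eq_empty_or_nonempty with rfl | hRne
  · refine ⟨∅, ∅, empty_subset _, fun v hv => absurd (hfR v hv) (notMem_empty _), ?_, by simp⟩
    simp
  obtain ⟨j₀, -, hmax⟩ := R.exists_max_image (fun j => #(W j)) hRne
  refine ⟨R.biUnion P, W j₀, (hWS j₀).trans (filter_subset _ _), fun v hv => ?_, hW j₀, ?_⟩
  · obtain ⟨x, hx, hxv⟩ := hP (f v) v (mem_filter.2 ⟨hv, rfl⟩)
    exact ⟨x, mem_biUnion.2 ⟨f v, hfR v hv, hx⟩, hxv⟩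
  · calc #(R.biUnion P) ≤ ∑ j ∈ R, #(P j) := card_biUnion_le
      _ ≤ ∑ _j ∈ R, k * #(W j₀) :=
          sum_le_sum fun j hj => (hcard j).trans (Nat.mul_le_mul_left k (hmax j hj))
      _ = #R * (k * #(W j₀)) := by rw [sum_const, smul_eq_mul]
      _ ≤ k * r * #(W j₀) := by rw [mul_left_comm, ← mul_assoc]; gcongr

end HasPiercingRatio

theorem exists_mem_Icc_natCast_mem_Icc {m : ℕ} (hm : 1 ≤ m) {t : ℝ} (ht : t ∈ Set.Icc 0 (m : ℝ)) :
    ∃ j ∈ Icc 1 m, (j : ℝ) ∈ Set.Icc t (t + 1) := by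
  refine ⟨max 1 ⌈t⌉₊, mem_Icc.2 ⟨le_max_left _ _, max_le hm (Nat.ceil_le.2 ht.2)⟩, ?_, ?_⟩
  · exact (Nat.le_ceil t).trans (by exact_mod_cast le_max_right _ _)
  · rcases Nat.eq_zero_or_pos ⌈t⌉₊ with h0 | hpos
    · have : t ≤ 0 := Nat.ceil_eq_zero.1 h0
      simp [ht.1.antisymm' this]
    · rw [max_eq_right hpos]
      exact (Nat.ceil_lt_add_one ht.1).le

/-- Greedy from the left: the leftmost interval `[g a, g a + 1]` joins the packing, and the `m`
points `g a + 1, …, g a + m` pierce every interval starting in `[g a, g a + m]`. -/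
theorem hasPiercingRatio_Icc {α : Type*} (g : α → ℝ) {m : ℕ} (hm : 1 ≤ m) (S : Finset α) :
    HasPiercingRatio (fun c s => c ∈ Set.Icc (g s) (g s + 1))
      (fun u w => (m : ℝ) < |g u - g w|) m S := by
  classical
  induction S using Finset.strongInduction with
  | H S ih =>
  rcases S.eq_empty_or_nonempty with rfl | hS
  · exact ⟨∅, ∅, subset_refl _, by simp, by simp, by simp⟩
  obtain ⟨a, haS, hamin⟩ := S.exists_min_image g hS
  have hfar : S.filter (fun s => g a + m < g s) ⊂ S :=
    filter_ssubset.2 ⟨a, haS, by simp⟩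
  obtain ⟨P, W, hWS, hP, hW, hcard⟩ := ih _ hfar
  have hfarW : ∀ w ∈ W, g a + m < g w := fun w hw => (mem_filter.1 (hWS hw)).2
  have haW : a ∉ W := fun ha => by linarith [hfarW a ha]
  refine ⟨P ∪ (Icc 1 m).image (fun j : ℕ => g a + j), insert a W,
    insert_subset haS ((hWS.trans (filter_subset _ _))), fun s hs => ?_, ?_, ?_⟩
  · by_cases hs' : g a + m < g s
    · obtain ⟨c, hc, hcs⟩ := hP s (mem_filter.2 ⟨hs, hs'⟩)
      exact ⟨c, mem_union_left _ hc, hcs⟩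
    · obtain ⟨j, hj, hjs⟩ := exists_mem_Icc_natCast_mem_Icc hm
        (t := g s - g a) ⟨sub_nonneg.2 (hamin s hs), by linarith⟩
      refine ⟨g a + j, mem_union_right _ (mem_image_of_mem _ hj), ?_, ?_⟩ <;>
        linarith [hjs.1, hjs.2]
  · rw [coe_insert, Set.pairwise_insert]
    refine ⟨hW, fun w hw _ => ?_⟩
    have := hfarW w hw
    rw [abs_sub_comm, abs_of_pos (by linarith)]
    exact ⟨by linarith, by linarith⟩
  · calc #(P ∪ (Icc 1 m).image (fun j : ℕ => g a + j))
        ≤ #P + #(Icc 1 m) := (card_union_le _ _).trans (Nat.add_le_add_left card_image_le _)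
      _ ≤ m * #W + m := by rw [Nat.card_Icc, Nat.add_sub_cancel]; omega
      _ = m * #(insert a W) := by rw [card_insert_of_notMem haW]; ring

theorem disjoint_vadd_of_lt_abs_sub {G : Type*} [AddCommGroup G] (f : G →+ ℝ) {C : Set G}
    {a r : ℝ} (hC : ∀ x ∈ C, f x ∈ Set.Icc a (a + r)) {v w : G} (h : r < |f v - f w|) :
    Disjoint (v +ᵥ C) (w +ᵥ C) := by
  rw [Set.disjoint_left]
  rintro _ ⟨x, hx, rfl⟩ ⟨y, hy, hxy⟩
  have hf : f v + f x = f w + f y := by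
    simpa only [vadd_eq_add, map_add] using (congrArg f hxy).symm
  obtain ⟨hx₁, hx₂⟩ := hC x hx
  obtain ⟨hy₁, hy₂⟩ := hC y hy
  rcases lt_abs.1 h with h | h <;> linarith

theorem sub_one_lt_abs_sub_of_ceil_modEq {a b : ℝ} {n : ℤ} (hne : ⌈a⌉ ≠ ⌈b⌉)
    (hmod : ⌈a⌉ ≡ ⌈b⌉ [ZMOD n]) : (n : ℝ) - 1 < |a - b| := by
  have hn : n ≤ |⌈b⌉ - ⌈a⌉| :=
    Int.le_of_dvd (abs_pos.2 (sub_ne_zero.2 hne.symm)) ((dvd_abs _ _).2 hmod.dvd)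
  have hn' : (n : ℝ) ≤ |(⌈b⌉ : ℝ) - ⌈a⌉| := by exact_mod_cast hn
  have ha := Int.ceil_lt_add_one a
  have hb := Int.ceil_lt_add_one b
  have ha' := Int.le_ceil a
  have hb' := Int.le_ceil b
  rcases abs_cases ((⌈b⌉ : ℝ) - ⌈a⌉) with ⟨h, -⟩ | ⟨h, -⟩ <;>
    rcases abs_cases (a - b) with ⟨h', h''⟩ | ⟨h', h''⟩ <;> linarith

section Parallelepiped

variable {ι E : Type*} [Fintype ι] [AddCommGroup E] [Module ℝ E] (b : Module.Basis ι ℝ E)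

theorem Module.Basis.add_sum_smul_mem_vadd {C : Set E} {p : E}
    (hP : {x | ∃ t : ι → ℝ, (∀ i, t i ∈ Set.Icc (0 : ℝ) 1) ∧ x = p + ∑ i, t i • b i} ⊆ C)
    {v : E} {c : ι → ℝ} (hc : ∀ i, c i ∈ Set.Icc (b.repr v i) (b.repr v i + 1)) :
    p + ∑ i, c i • b i ∈ v +ᵥ C := by
  refine ⟨_, hP ⟨fun i => c i - b.repr v i, fun i => ?_, rfl⟩, ?_⟩
  · exact ⟨sub_nonneg.2 (hc i).1, sub_le_iff_le_add'.2 (hc i).2⟩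
  · simp only [vadd_eq_add, sub_smul, sum_sub_distrib, b.sum_repr]
    abel

theorem Module.Basis.repr_mem_Icc_of_mem_parallelepiped {q x : E} {e : ι → ℝ}
    (hx : x ∈ {x | ∃ t : ι → ℝ, (∀ i, t i ∈ Set.Icc (0 : ℝ) 1) ∧ x = q + ∑ i, (t i * e i) • b i})
    {i : ι} (he : 0 ≤ e i) : b.repr x i ∈ Set.Icc (b.repr q i) (b.repr q i + e i) := by
  classical
  obtain ⟨t, ht, rfl⟩ := hx
  have hrepr : b.repr (q + ∑ j, (t j * e j) • b j) i = b.repr q i + t i * e i := by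
    simp [Finsupp.single_apply]
  rw [hrepr]
  exact ⟨le_add_of_nonneg_right (mul_nonneg (ht i).1 he),
    add_le_add_right (mul_le_of_le_one_left he (ht i).2) _⟩

variable {b} {C : Set E} {p q : E} {e : ι → ℝ}

theorem disjoint_vadd_of_lt_abs_repr_sub
    (hQ : C ⊆ {x | ∃ t : ι → ℝ, (∀ i, t i ∈ Set.Icc (0 : ℝ) 1) ∧ x = q + ∑ i, (t i * e i) • b i})
    {i : ι} (he : 0 ≤ e i) {v w : E} (h : e i < |b.repr v i - b.repr w i|) :
    Disjoint (v +ᵥ C) (w +ᵥ C) :=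
  disjoint_vadd_of_lt_abs_sub (b.coord i).toAddMonoidHom
    (fun _ hx => b.repr_mem_Icc_of_mem_parallelepiped (hQ hx) he) h

theorem hasPiercingRatio_column [DecidableEq ι]
    (hP : {x | ∃ t : ι → ℝ, (∀ i, t i ∈ Set.Icc (0 : ℝ) 1) ∧ x = p + ∑ i, t i • b i} ⊆ C)
    (hQ : C ⊆ {x | ∃ t : ι → ℝ, (∀ i, t i ∈ Set.Icc (0 : ℝ) 1) ∧ x = q + ∑ i, (t i * e i) • b i})
    {L : ι} (he : 0 ≤ e L) {m : ℕ} (hm : 1 ≤ m) (hmL : e L ≤ m) (κ : ι → ℤ) {S : Finset E}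
    (hS : ∀ v ∈ S, ∀ i ≠ L, ⌈b.repr v i⌉ = κ i) :
    HasPiercingRatio (fun x v => x ∈ v +ᵥ C) (fun u w => Disjoint (u +ᵥ C) (w +ᵥ C)) m S := by
  refine (hasPiercingRatio_Icc (fun v => b.repr v L) hm S).map
    (fun c => p + ∑ i, Function.update (fun i => (κ i : ℝ)) L c i • b i)
    (fun v hv c hc => b.add_sum_smul_mem_vadd hP fun i => ?_)
    (fun u _ w _ h => disjoint_vadd_of_lt_abs_repr_sub hQ he (hmL.trans_lt h))
  rcases eq_or_ne i L with rfl | hi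
  · rwa [Function.update_self]
  · rw [Function.update_of_ne hi, ← hS v hv i hi]
    exact ⟨Int.le_ceil _, (Int.ceil_lt_add_one _).le⟩

theorem card_piFinset_Ico_update [DecidableEq ι] (L : ι) (n : ι → ℕ) :
    #(Fintype.piFinset fun i => Ico 0 (Function.update n L 1 i : ℤ)) = ∏ i ∈ univ.erase L, n i := by
  simp only [Fintype.card_piFinset, Int.card_Ico, sub_zero, Int.toNat_natCast]
  rw [prod_update_of_mem (mem_univ L), one_mul, sdiff_singleton_eq_erase]

theorem hasPiercingRatio_vadd [DecidableEq ι]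
    (hP : {x | ∃ t : ι → ℝ, (∀ i, t i ∈ Set.Icc (0 : ℝ) 1) ∧ x = p + ∑ i, t i • b i} ⊆ C)
    (hQ : C ⊆ {x | ∃ t : ι → ℝ, (∀ i, t i ∈ Set.Icc (0 : ℝ) 1) ∧ x = q + ∑ i, (t i * e i) • b i})
    (he : ∀ i, 0 ≤ e i) (L : ι) {m : ℕ} (hm : 1 ≤ m) (hmL : e L ≤ m) (n : ι → ℕ)
    (hn : ∀ i ≠ L, e i + 1 ≤ n i) (V : Finset E) :
    HasPiercingRatio (fun x v => x ∈ v +ᵥ C) (fun u w => Disjoint (u +ᵥ C) (w +ᵥ C))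
      (m * ∏ i ∈ univ.erase L, n i) V := by
  classical
  set column : E → ι → ℤ := fun v => Function.update (fun i => ⌈b.repr v i⌉) L 0
  have hcolumn : ∀ v, ∀ i ≠ L, column v i = ⌈b.repr v i⌉ := fun v i hi =>
    Function.update_of_ne hi _ _
  set residue : E → ι → ℤ := fun v i => column v i % n i
  refine HasPiercingRatio.of_fibers residue (fun v _ => ?_) (card_piFinset_Ico_update L n).le
    fun ρ => HasPiercingRatio.of_fibers_of_apart column (fun κ => ?_) ?_
  · rw [Fintype.mem_piFinset]
    intro i
    rcases eq_or_ne i L with rfl | hi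
    · simp [residue, column]
    · simp only [Function.update_of_ne hi, mem_Ico]
      have : (0 : ℤ) < n i := by exact_mod_cast (show (0 : ℝ) < n i by linarith [he i, hn i hi])
      exact ⟨Int.emod_nonneg _ this.ne', Int.emod_lt_of_pos _ this⟩
  · refine hasPiercingRatio_column hP hQ (he L) hm hmL κ fun v hv i hi => ?_
    rw [← hcolumn v i hi, (mem_filter.1 hv).2]
  · intro u hu w hw huw
    obtain ⟨i, hi⟩ := Function.ne_iff.1 huw
    have hiL : i ≠ L := by rintro rfl; simp [column] at hi
    have hmod : column u i ≡ column w i [ZMOD n i] :=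
      congrFun ((mem_filter.1 hu).2.trans (mem_filter.1 hw).2.symm) i
    rw [hcolumn u i hiL, hcolumn w i hiL] at hi hmod
    refine disjoint_vadd_of_lt_abs_repr_sub hQ (he i) ?_
    have := sub_one_lt_abs_sub_of_ceil_modEq hi hmod
    push_cast at this
    linarith [hn i hiL]

end Parallelepiped

/-- If a convex body `C` in `ℝ^d` (`d ≥ 2`) is sandwiched between two parallel
parallelepipeds `p + {∑ tᵢ bᵢ : tᵢ ∈ [0,1]}` and `q + {∑ tᵢ (eᵢ bᵢ) : tᵢ ∈ [0,1]}`
(with `eᵢ ≥ 1`), then for every finite family of translates of `C`,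
`τ(F) ≤ ⌈e_d⌉ · ∏_{i=1}^{d−1} ⌈eᵢ + 1⌉ · ν(F)`. -/
theorem piercing_translates_sandwiched_parallelepipeds
    (d : ℕ) (hd : 2 ≤ d)
    (C : Set (EuclideanSpace ℝ (Fin d)))
    (b : Module.Basis (Fin d) ℝ (EuclideanSpace ℝ (Fin d)))
    (e : Fin d → ℝ) (he : ∀ i, 1 ≤ e i)
    (p q : EuclideanSpace ℝ (Fin d))
    (hP : {x | ∃ t : Fin d → ℝ, (∀ i, t i ∈ Set.Icc (0 : ℝ) 1) ∧
            x = p + ∑ i, t i • b i} ⊆ C)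
    (hQ : C ⊆ {x | ∃ t : Fin d → ℝ, (∀ i, t i ∈ Set.Icc (0 : ℝ) 1) ∧
            x = q + ∑ i, (t i * e i) • b i})
    (V : Finset (EuclideanSpace ℝ (Fin d))) :
    ∃ P W : Finset (EuclideanSpace ℝ (Fin d)),
      W ⊆ V ∧
      (∀ v ∈ V, ∃ x ∈ P, x ∈ v +ᵥ C) ∧
      ((W : Set (EuclideanSpace ℝ (Fin d))).Pairwise fun u w =>
        Disjoint (u +ᵥ C) (w +ᵥ C)) ∧
      (P.card : ℤ) ≤ ⌈e ⟨d - 1, by omega⟩⌉ *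
        (∏ i ∈ Finset.univ.erase (⟨d - 1, by omega⟩ : Fin d), ⌈e i + 1⌉) *
        (W.card : ℤ) := by
  set L : Fin d := ⟨d - 1, by omega⟩
  have he₀ : ∀ i, 0 ≤ e i := fun i => zero_le_one.trans (he i)
  obtain ⟨P, W, hWV, hPV, hW, hcard⟩ := hasPiercingRatio_vadd hP hQ he₀ L
    (Nat.one_le_ceil_iff.2 (zero_lt_one.trans_le (he L))) (Nat.le_ceil (e L))
    (fun i => ⌈e i + 1⌉₊) (fun i _ => Nat.le_ceil _) V
  refine ⟨P, W, hWV, hPV, hW, ?_⟩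
  have hcard' : (#P : ℤ) ≤ ⌈e L⌉₊ * (∏ i ∈ univ.erase L, (⌈e i + 1⌉₊ : ℤ)) * #W := by
    exact_mod_cast hcard
  rwa [Int.natCast_ceil_eq_ceil (he₀ L), prod_congr rfl fun i _ =>
    Int.natCast_ceil_eq_ceil (add_nonneg (he₀ i) zero_le_one)] at hcard'
end

section
/- For every dimension d ≥ 2, every parallelepiped P in ℝ^d (i.e., P = p + {∑_i t_i b_i : t_i ∈ [0,1]} for some point p and some basis (b_1,…,b_d) of ℝ^d), and every finite family F of translates of P, τ(F) ≤ 2^(d−1) · ν(F). -/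
/-!
In the coordinates of the basis, the translates of `P` are translates of the unit cube. Let `v₁ +ᵥ P`
have the least first coordinate. A translate meeting it differs from it by at most `1` in every
coordinate and lies no lower in the first one, so it contains one of the `2 ^ (d - 1)` points
`v₁ + p + b₀ + ∑_{i ∈ s} bᵢ`, `s ⊆ {1, …, d - 1}`. The other translates are disjoint from
`v₁ +ᵥ P`; recursing on them adds `v₁` to the packing and those points to the transversal.
-/

open Pointwise

open Finset in
theorem exists_transversal_le_mul_packing_of_local {α β γ : Type*} [LinearOrder γ]
    (K : α → Set β) (key : α → γ) (k : ℕ) (hne : ∀ v, (K v).Nonempty)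
    (hloc : ∀ v, ∃ Q : Finset β, Q.card ≤ k ∧
      ∀ w, key v ≤ key w → (K v ∩ K w).Nonempty → ∃ x ∈ Q, x ∈ K w)
    (V : Finset α) :
    ∃ Q : Finset β, ∃ W : Finset α, W ⊆ V ∧ (∀ v ∈ V, ∃ x ∈ Q, x ∈ K v) ∧
      (W : Set α).Pairwise (fun u w => Disjoint (K u) (K w)) ∧ Q.card ≤ k * W.card := by
  classical
  induction V using Finset.strongInduction with
  | H V ih =>
  rcases V.eq_empty_or_nonempty with rfl | hV
  · exact ⟨∅, ∅, by simp⟩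
  obtain ⟨v₁, hv₁, hmin⟩ := V.exists_min_image key hV
  set V' := V.filter fun w => Disjoint (K v₁) (K w)
  have hself : ¬ Disjoint (K v₁) (K v₁) :=
    Set.not_disjoint_iff_nonempty_inter.2 (by simpa using hne v₁)
  have hv₁' : v₁ ∉ V' := fun h => hself (mem_filter.1 h).2
  obtain ⟨Q', W', hW'V', hpierce', hpair', hcard'⟩ := ih V' (filter_ssubset.2 ⟨v₁, hv₁, hself⟩)
  obtain ⟨Q₁, hQ₁, hpierce₁⟩ := hloc v₁
  refine ⟨Q₁ ∪ Q', insert v₁ W', insert_subset hv₁ (hW'V'.trans (filter_subset _ _)), ?_, ?_, ?_⟩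
  · intro v hv
    by_cases hdisj : Disjoint (K v₁) (K v)
    · obtain ⟨x, hx, hxv⟩ := hpierce' v (mem_filter.2 ⟨hv, hdisj⟩)
      exact ⟨x, mem_union_right _ hx, hxv⟩
    · obtain ⟨x, hx, hxv⟩ :=
        hpierce₁ v (hmin v hv) (Set.not_disjoint_iff_nonempty_inter.1 hdisj)
      exact ⟨x, mem_union_left _ hx, hxv⟩
  · rw [coe_insert, Set.pairwise_insert]
    refine ⟨hpair', fun w hw _ => ?_⟩
    have hdisj : Disjoint (K v₁) (K w) := (mem_filter.1 (hW'V' hw)).2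
    exact ⟨hdisj, hdisj.symm⟩
  · rw [card_insert_of_notMem fun h => hv₁' (hW'V' h), Nat.mul_succ]
    have := card_union_le Q₁ Q'
    omega

section Parallelepiped

variable {ι E : Type*} [AddCommGroup E] [Module ℝ E] (b : Module.Basis ι ℝ E)

theorem repr_sum_self_apply [DecidableEq ι] (s : Finset ι) (j : ι) :
    b.repr (∑ i ∈ s, b i) j = if j ∈ s then 1 else 0 := by
  simp [map_sum, Finsupp.finsetSum_apply, Finsupp.single_apply]

variable [Fintype ι]

theorem mem_vadd_parallelepiped_iff {u x : E} :
    x ∈ u +ᵥ parallelepiped b ↔ ∀ i, b.repr x i - b.repr u i ∈ Set.Icc (0 : ℝ) 1 := by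
  rw [Set.mem_vadd_set_iff_neg_vadd_mem, parallelepiped_basis_eq]
  simp [sub_eq_neg_add]

theorem abs_repr_sub_le_one_of_vadd_parallelepiped_inter_nonempty {u w : E}
    (h : ((u +ᵥ parallelepiped b) ∩ (w +ᵥ parallelepiped b)).Nonempty) (i : ι) :
    |b.repr w i - b.repr u i| ≤ 1 := by
  obtain ⟨x, hxu, hxw⟩ := h
  have hu := (mem_vadd_parallelepiped_iff b).1 hxu i
  have hw := (mem_vadd_parallelepiped_iff b).1 hxw i
  rw [Set.mem_Icc] at hu hw
  exact abs_le.2 ⟨by linarith, by linarith⟩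

open Finset in
theorem exists_pierce_vadd_parallelepiped_of_le (u : E) (i₀ : ι) :
    ∃ Q : Finset E, Q.card ≤ 2 ^ (Fintype.card ι - 1) ∧
      ∀ w, b.repr u i₀ ≤ b.repr w i₀ →
        ((u +ᵥ parallelepiped b) ∩ (w +ᵥ parallelepiped b)).Nonempty →
        ∃ x ∈ Q, x ∈ w +ᵥ parallelepiped b := by
  classical
  refine ⟨(univ.erase i₀).powerset.image fun s => u + ∑ i ∈ insert i₀ s, b i, ?_, ?_⟩
  · refine card_image_le.trans ?_
    rw [card_powerset, card_erase_of_mem (mem_univ _), card_univ]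
  intro w hle hmeet
  have hnear := abs_repr_sub_le_one_of_vadd_parallelepiped_inter_nonempty b hmeet
  -- go up by `b i` exactly along the directions in which `w` lies above `u`
  set s := (univ.erase i₀).filter fun i => b.repr u i < b.repr w i
  refine ⟨u + ∑ i ∈ insert i₀ s, b i, mem_image_of_mem _ (mem_powerset.2 (filter_subset _ _)), ?_⟩
  rw [mem_vadd_parallelepiped_iff]
  intro j
  obtain ⟨h₁, h₂⟩ := abs_le.1 (hnear j)
  simp only [map_add, Finsupp.add_apply, repr_sum_self_apply, mem_insert, s, mem_filter,
    mem_erase, mem_univ, Set.mem_Icc]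
  by_cases hj : j = i₀
  · subst hj
    simp only [true_or, if_true]
    constructor <;> linarith
  · by_cases hlt : b.repr u j < b.repr w j
    · simp only [hj, hlt, false_or, ne_eq, not_false_eq_true, and_self, if_true]
      constructor <;> linarith
    · simp only [hj, hlt, false_or, and_false, if_false]
      constructor <;> linarith

end Parallelepiped

/-- For every dimension `d ≥ 2`, every parallelepiped
`P = p + {∑ tᵢ bᵢ : tᵢ ∈ [0,1]}` in `ℝ^d`, and every finite family of translates of `P`,
`τ(F) ≤ 2^(d−1) · ν(F)`. -/
theorem piercing_translates_parallelepiped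
    (d : ℕ) (hd : 2 ≤ d)
    (b : Module.Basis (Fin d) ℝ (EuclideanSpace ℝ (Fin d)))
    (p : EuclideanSpace ℝ (Fin d))
    (P : Set (EuclideanSpace ℝ (Fin d)))
    (hP : P = {x | ∃ t : Fin d → ℝ, (∀ i, t i ∈ Set.Icc (0 : ℝ) 1) ∧
            x = p + ∑ i, t i • b i})
    (V : Finset (EuclideanSpace ℝ (Fin d))) :
    ∃ Q W : Finset (EuclideanSpace ℝ (Fin d)),
      W ⊆ V ∧
      (∀ v ∈ V, ∃ x ∈ Q, x ∈ v +ᵥ P) ∧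
      ((W : Set (EuclideanSpace ℝ (Fin d))).Pairwise fun u w =>
        Disjoint (u +ᵥ P) (w +ᵥ P)) ∧
      Q.card ≤ 2 ^ (d - 1) * W.card := by
  have hP' : P = p +ᵥ parallelepiped b := by
    ext x
    simp only [hP, Set.mem_vadd_set, mem_parallelepiped_iff, Set.mem_ofPred_eq, vadd_eq_add,
      Set.mem_Icc, Pi.le_def]
    aesop
  simp_rw [hP', vadd_vadd]
  let i₀ : Fin d := ⟨0, by omega⟩
  refine exists_transversal_le_mul_packing_of_local _ (fun v => b.repr (v + p) i₀) _
    (fun v => ⟨v + p, (mem_vadd_parallelepiped_iff b).2 fun i => by simp⟩) (fun v => ?_) V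
  obtain ⟨Q, hQ, hpierce⟩ := exists_pierce_vadd_parallelepiped_of_le b (v + p) i₀
  exact ⟨Q, by simpa using hQ, fun w => hpierce (w + p)⟩
end

section
/- Let d ≥ 2 and let S be a centrally symmetric convex body in ℝ^d with S = −S. Suppose Λ₁ is a lattice in ℝ^d such that the translates {S + λ : λ ∈ Λ₁} cover ℝ^d, and Λ₂ is a lattice in ℝ^d such that the translates {S + μ : μ ∈ Λ₂} are pairwise disjoint. Then for every finite family F of translates of S, τ(F) ≤ 2^d · (covol(Λ₂) / covol(Λ₁)) · ν(F). (Here vol(S)/covol(Λ₁) is the density of the lattice covering and vol(S)/covol(Λ₂) is the density of the lattice packing, so this bound equals 2^d times the ratio of the covering density to the packing density.) -/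
/-!
Let `A` be the union of the family. The number of points of `x + Λ` in `A`, integrated over a
fundamental domain of a lattice `Λ`, is `vol A`; so some translate `u + Λ` meets `A` in at
most `vol A / covol Λ` points and some translate meets it in at least that many. For the
covering lattice `Λ₁`, the points of `(u + Λ₁) ∩ A` pierce every member of the family, since
`S = -S`. For the packing lattice, take `(t + 2Λ₂) ∩ A` and assign to each of its points a
member of the family containing it: two points of `2Λ₂` whose members meet differ by an
element of `2(S + S)`, which `Λ₂`-packing excludes unless they coincide. Hence the members are
distinct and pairwise disjoint, and `τ · covol Λ₁ ≤ vol A ≤ 2^d covol Λ₂ · ν`.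
-/

open Pointwise MeasureTheory Set
open scoped ENNReal

instance Submodule.vaddInvariantMeasure {E : Type*} [AddCommGroup E] [MeasurableSpace E]
    {μ : Measure E} [VAddInvariantMeasure E E μ] (L : Submodule ℤ E) :
    VAddInvariantMeasure L E μ :=
  inferInstanceAs (VAddInvariantMeasure L.toAddSubgroup E μ)

lemma encard_vadd_mem_eq_tsum {G α : Type*} [AddGroup G] [AddAction G α] (A : Set α) (x : α) :
    ({g : G | g +ᵥ x ∈ A}.encard : ℝ≥0∞) = ∑' g : G, A.indicator 1 (g +ᵥ x) := by
  rw [← ENNReal.tsum_set_one]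
  exact tsum_subtype {g : G | g +ᵥ x ∈ A} 1

lemma measurable_encard_vadd_mem {G α : Type*} [AddGroup G] [Countable G] [AddAction G α]
    [MeasurableSpace α] [MeasurableConstVAdd G α] {A : Set α} (hA : MeasurableSet A) :
    Measurable fun x : α => ({g : G | g +ᵥ x ∈ A}.encard : ℝ≥0∞) := by
  simp_rw [encard_vadd_mem_eq_tsum]
  exact Measurable.tsum fun g => (measurable_one.indicator hA).comp (measurable_const_vadd g)

namespace MeasureTheory.IsAddFundamentalDomain

variable {G α : Type*} [AddGroup G] [Countable G] [AddAction G α] [MeasurableSpace α]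
  [MeasurableConstVAdd G α] {μ : Measure α} [VAddInvariantMeasure G α μ] {D A : Set α}

theorem setLIntegral_encard_vadd_mem (h : IsAddFundamentalDomain G D μ) (hA : MeasurableSet A) :
    ∫⁻ x in D, ({g : G | g +ᵥ x ∈ A}.encard : ℝ≥0∞) ∂μ = μ A := by
  simp_rw [encard_vadd_mem_eq_tsum]
  rw [lintegral_tsum (f := fun g x => A.indicator 1 (g +ᵥ x)) fun g =>
      ((measurable_one.indicator hA).comp (measurable_const_vadd g)).aemeasurable,
    ← h.lintegral_eq_tsum'' (A.indicator 1), lintegral_indicator_one hA]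

theorem exists_encard_vadd_mem_mul_le (h : IsAddFundamentalDomain G D μ) (hA : MeasurableSet A)
    (hD₀ : μ D ≠ 0) (hD : μ D ≠ ∞) :
    ∃ x, ({g : G | g +ᵥ x ∈ A}.encard : ℝ≥0∞) * μ D ≤ μ A := by
  have : IsFiniteMeasure (μ.restrict D) := isFiniteMeasure_restrict.mpr hD
  obtain ⟨x, hx⟩ := exists_le_laverage (μ := μ.restrict D) (by simpa using hD₀)
    (measurable_encard_vadd_mem (G := G) hA).aemeasurable
  rw [laverage_eq, h.setLIntegral_encard_vadd_mem hA, Measure.restrict_apply_univ] at hx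
  exact ⟨x, (ENNReal.le_div_iff_mul_le (.inl hD₀) (.inl hD)).mp hx⟩

theorem exists_le_encard_vadd_mem_mul (h : IsAddFundamentalDomain G D μ) (hA : MeasurableSet A)
    (hA' : μ A ≠ ∞) (hD₀ : μ D ≠ 0) (hD : μ D ≠ ∞) :
    ∃ x, μ A ≤ ({g : G | g +ᵥ x ∈ A}.encard : ℝ≥0∞) * μ D := by
  obtain ⟨x, hx⟩ := exists_laverage_le (μ := μ.restrict D) (by simpa using hD₀)
    (by rwa [h.setLIntegral_encard_vadd_mem hA])
  rw [laverage_eq, h.setLIntegral_encard_vadd_mem hA, Measure.restrict_apply_univ] at hx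
  exact ⟨x, (ENNReal.div_le_iff hD₀ hD).mp hx⟩

end MeasureTheory.IsAddFundamentalDomain

section SymmetricTranslates

variable {E : Type*} [AddCommGroup E] {S : Set E}

lemma mem_vadd_set_iff_sub_mem {v x : E} : x ∈ v +ᵥ S ↔ x - v ∈ S := by
  rw [mem_vadd_set_iff_neg_vadd_mem, vadd_eq_add, neg_add_eq_sub]

lemma neg_mem_of_eq_neg (hS : S = -S) {x : E} (hx : x ∈ S) : -x ∈ S := by
  rw [hS]
  exact neg_mem_neg.mpr hx

theorem exists_pierce_card_le_of_lattice_covering (hS : S = -S) (L : Submodule ℤ E)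
    (hcover : ∀ x, ∃ g : L, x ∈ (g : E) +ᵥ S) (V : Finset E) (u : E) :
    ∃ P : Finset E, (∀ v ∈ V, ∃ x ∈ P, x ∈ v +ᵥ S) ∧
      (P.card : ℕ∞) ≤ {g : L | g +ᵥ u ∈ ⋃ v ∈ V, v +ᵥ S}.encard := by
  classical
  have hpierce : ∀ v : E, ∃ g : L, (g : E) + u ∈ v +ᵥ S := by
    intro v
    obtain ⟨g, hg⟩ := hcover (v - u)
    refine ⟨g, mem_vadd_set_iff_sub_mem.mpr ?_⟩
    convert neg_mem_of_eq_neg hS (mem_vadd_set_iff_sub_mem.mp hg) using 1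
    abel
  choose g hg using hpierce
  refine ⟨V.image fun v => (g v : E) + u,
    fun v hv => ⟨_, Finset.mem_image_of_mem (fun v => (g v : E) + u) hv, hg v⟩, ?_⟩
  rw [← encard_coe_eq_coe_finsetCard, Finset.coe_image]
  calc ((fun v => (g v : E) + u) '' V).encard = ((· +ᵥ u) '' (g '' V)).encard := by
        rw [image_image]; rfl
    _ ≤ (g '' V).encard := encard_image_le _ _
    _ ≤ _ := encard_le_encard (by rintro _ ⟨v, hv, rfl⟩; exact mem_biUnion hv (hg v))

lemma eq_of_coe_sub_mem_add (hS : S = -S) {L : Submodule ℤ E}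
    (hpack : Pairwise fun g g' : L => Disjoint ((g : E) +ᵥ S) ((g' : E) +ᵥ S)) {g g' : L}
    (h : (g : E) - g' ∈ S + S) : g = g' := by
  obtain ⟨s₁, hs₁, s₂, hs₂, hsum⟩ := mem_add.mp h
  refine hpack.eq (not_disjoint_iff.mpr ⟨g' + s₂, mem_vadd_set_iff_sub_mem.mpr ?_,
    vadd_mem_vadd_set hs₂⟩)
  convert neg_mem_of_eq_neg hS hs₁ using 1
  rw [eq_sub_of_add_eq hsum]
  abel

variable [Module ℝ E]

lemma inv_two_smul_sub_mem (hconv : Convex ℝ S) (hS : S = -S) {a b : E} (ha : a ∈ S)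
    (hb : b ∈ S) : (2⁻¹ : ℝ) • (a - b) ∈ S := by
  convert hconv ha (neg_mem_of_eq_neg hS hb) (by norm_num : (0 : ℝ) ≤ 2⁻¹)
    (by norm_num : (0 : ℝ) ≤ 2⁻¹) (by norm_num) using 1
  module

lemma eq_of_two_smul_mem_vadd_of_not_disjoint (hconv : Convex ℝ S) (hS : S = -S)
    {L : Submodule ℤ E} (hpack : Pairwise fun g g' : L => Disjoint ((g : E) +ᵥ S) ((g' : E) +ᵥ S))
    {g g' : L} {t v v' : E} (hg : (2 : ℝ) • ((g : E) + t) ∈ v +ᵥ S)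
    (hg' : (2 : ℝ) • ((g' : E) + t) ∈ v' +ᵥ S) (hvv' : ¬Disjoint (v +ᵥ S) (v' +ᵥ S)) :
    g = g' := by
  obtain ⟨p, hp, hp'⟩ := not_disjoint_iff.mp hvv'
  refine eq_of_coe_sub_mem_add hS hpack (mem_add.mpr ⟨_,
    inv_two_smul_sub_mem hconv hS (mem_vadd_set_iff_sub_mem.mp hg) (mem_vadd_set_iff_sub_mem.mp hp),
    _, inv_two_smul_sub_mem hconv hS (mem_vadd_set_iff_sub_mem.mp hp')
      (mem_vadd_set_iff_sub_mem.mp hg'), ?_⟩)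
  module

theorem exists_pairwise_disjoint_card_ge_of_lattice_packing (hconv : Convex ℝ S) (hS : S = -S)
    (L : Submodule ℤ E)
    (hpack : Pairwise fun g g' : L => Disjoint ((g : E) +ᵥ S) ((g' : E) +ᵥ S))
    (V : Finset E) (t : E) :
    ∃ W ⊆ V, (W : Set E).Pairwise (fun u w => Disjoint (u +ᵥ S) (w +ᵥ S)) ∧
      {g : L | g +ᵥ t ∈ (2⁻¹ : ℝ) • ⋃ v ∈ V, v +ᵥ S}.encard ≤ W.card := by
  classical
  set F := {g : L | g +ᵥ t ∈ (2⁻¹ : ℝ) • ⋃ v ∈ V, v +ᵥ S}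
  have hF : ∀ g ∈ F, ∃ v ∈ V, (2 : ℝ) • ((g : E) + t) ∈ v +ᵥ S := by
    intro g hg
    rw [mem_ofPred_eq, mem_smul_set_iff_inv_smul_mem₀ (by norm_num), inv_inv, mem_iUnion₂] at hg
    simpa only [exists_prop, Submodule.vadd_def, vadd_eq_add] using hg
  choose! w hwV hw using hF
  have hinj : InjOn w F := fun g hg g' hg' hgg' =>
    eq_of_two_smul_mem_vadd_of_not_disjoint hconv hS hpack (hw g hg) (hw g' hg')
      (not_disjoint_iff.mpr ⟨_, hw g hg, hgg' ▸ hw g hg⟩)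
  refine ⟨V.filter (· ∈ w '' F), Finset.filter_subset _ _, ?_, ?_⟩
  · intro x hx y hy hxy
    obtain ⟨-, g, hg, rfl⟩ := Finset.mem_filter.mp hx
    obtain ⟨-, g', hg', rfl⟩ := Finset.mem_filter.mp hy
    by_contra hdisj
    exact hxy (congrArg w
      (eq_of_two_smul_mem_vadd_of_not_disjoint hconv hS hpack (hw g hg) (hw g' hg') hdisj))
  · rw [← encard_coe_eq_coe_finsetCard, Finset.coe_filter, ← hinj.encard_image]
    exact encard_le_encard fun _ ⟨g, hg, hgx⟩ => ⟨hgx ▸ hwV g hg, g, hg, hgx⟩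

end SymmetricTranslates

section IntegerCombinations

variable {ι E : Type*} [Fintype ι] [AddCommGroup E] [Module ℝ E]

lemma Module.Basis.mem_span_int_iff (b : Module.Basis ι ℝ E) {x : E} :
    x ∈ Submodule.span ℤ (range b) ↔ ∃ c : ι → ℤ, ∑ i, (c i : ℝ) • b i = x := by
  simp only [Submodule.mem_span_range_iff_exists_fun, Int.cast_smul_eq_zsmul]

lemma Module.Basis.pairwise_span_int (b : Module.Basis ι ℝ E) {r : E → E → Prop}
    (h : ∀ c c' : ι → ℤ, c ≠ c' → r (∑ i, (c i : ℝ) • b i) (∑ i, (c' i : ℝ) • b i)) :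
    Pairwise fun g g' : Submodule.span ℤ (range b) => r g g' := by
  intro g g' hne
  obtain ⟨c, hc⟩ := b.mem_span_int_iff.mp g.2
  obtain ⟨c', hc'⟩ := b.mem_span_int_iff.mp g'.2
  rw [← hc, ← hc']
  exact h c c' fun hcc' => hne (Subtype.ext (hc.symm.trans (hcc' ▸ hc')))

lemma setOf_exists_sum_smul_eq_parallelepiped (v : ι → E) :
    {x : E | ∃ t : ι → ℝ, (∀ i, t i ∈ Icc (0 : ℝ) 1) ∧ x = ∑ i, t i • v i} = parallelepiped v := by
  ext x
  simp only [mem_ofPred_eq, mem_parallelepiped_iff, mem_Icc, Pi.le_def, Pi.zero_apply,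
    Pi.one_apply, forall_and]

end IntegerCombinations

lemma natCast_le_mul_toReal_div_mul_of_mul_le {p w : ℕ} {a b : ℝ≥0∞} {c : ℝ} (ha₀ : a ≠ 0)
    (ha : a ≠ ∞) (hb : b ≠ ∞) (hc : 0 ≤ c) (h : p * a ≤ ENNReal.ofReal c * (w * b)) :
    (p : ℝ) ≤ c * (b.toReal / a.toReal) * w := by
  have hreal := ENNReal.toReal_mono (by finiteness) h
  simp only [ENNReal.toReal_mul, ENNReal.toReal_natCast, ENNReal.toReal_ofReal hc] at hreal
  rw [mul_div_assoc', div_mul_eq_mul_div, le_div_iff₀ (ENNReal.toReal_pos ha₀ ha)]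
  linarith

theorem piercing_translates_symmetric_lattice_bound_general
    (d : ℕ)
    (S : Set (EuclideanSpace ℝ (Fin d)))
    (hScompact : IsCompact S) (hSconv : Convex ℝ S)
    (hSsymm : S = -S)
    (b₁ b₂ : Module.Basis (Fin d) ℝ (EuclideanSpace ℝ (Fin d)))
    (hcover : ∀ x : EuclideanSpace ℝ (Fin d),
      ∃ c : Fin d → ℤ, x ∈ (∑ i, (c i : ℝ) • b₁ i) +ᵥ S)
    (hpack : ∀ c c' : Fin d → ℤ, c ≠ c' →
      Disjoint ((∑ i, (c i : ℝ) • b₂ i) +ᵥ S) ((∑ i, (c' i : ℝ) • b₂ i) +ᵥ S))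
    (V : Finset (EuclideanSpace ℝ (Fin d))) :
    ∃ P W : Finset (EuclideanSpace ℝ (Fin d)),
      W ⊆ V ∧
      (∀ v ∈ V, ∃ x ∈ P, x ∈ v +ᵥ S) ∧
      ((W : Set (EuclideanSpace ℝ (Fin d))).Pairwise fun u w =>
        Disjoint (u +ᵥ S) (w +ᵥ S)) ∧
      (P.card : ℝ) ≤ 2 ^ d *
        ((volume {x : EuclideanSpace ℝ (Fin d) | ∃ t : Fin d → ℝ,
            (∀ i, t i ∈ Set.Icc (0 : ℝ) 1) ∧ x = ∑ i, t i • b₂ i}).toReal /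
         (volume {x : EuclideanSpace ℝ (Fin d) | ∃ t : Fin d → ℝ,
            (∀ i, t i ∈ Set.Icc (0 : ℝ) 1) ∧ x = ∑ i, t i • b₁ i}).toReal) *
        (W.card : ℝ) := by
  set A := ⋃ v ∈ V, v +ᵥ S
  have hA : MeasurableSet A :=
    V.measurableSet_biUnion fun v _ => hScompact.isClosed.measurableSet.const_vadd v
  have hA_compact : IsCompact A := V.isCompact_biUnion fun v _ => hScompact.vadd v
  have hA_half : volume A = ENNReal.ofReal (2 ^ d) * volume ((2⁻¹ : ℝ) • A) := by
    conv_lhs => rw [← smul_inv_smul₀ (two_ne_zero' ℝ) A]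
    rw [Measure.addHaar_smul_of_nonneg _ zero_le_two, finrank_euclideanSpace_fin]
  have hD₀ (b : Module.Basis (Fin d) ℝ (EuclideanSpace ℝ (Fin d))) :=
    ZSpan.measure_fundamentalDomain_ne_zero b (μ := volume)
  have hD (b : Module.Basis (Fin d) ℝ (EuclideanSpace ℝ (Fin d))) :
      volume (ZSpan.fundamentalDomain b) ≠ ∞ :=
    (ZSpan.fundamentalDomain_isBounded b).measure_lt_top.ne
  obtain ⟨u, hu⟩ := (ZSpan.isAddFundamentalDomain b₁ volume).exists_encard_vadd_mem_mul_le hA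
    (hD₀ b₁) (hD b₁)
  obtain ⟨t, ht⟩ := (ZSpan.isAddFundamentalDomain b₂ volume).exists_le_encard_vadd_mem_mul
    (hA.const_smul₀ _) (hA_compact.smul (2⁻¹ : ℝ)).measure_lt_top.ne (hD₀ b₂) (hD b₂)
  obtain ⟨P, hP, hPu⟩ := exists_pierce_card_le_of_lattice_covering hSsymm _
    (fun x => (hcover x).elim fun c hc => ⟨⟨_, b₁.mem_span_int_iff.mpr ⟨c, rfl⟩⟩, hc⟩) V u
  obtain ⟨W, hWV, hW, hWt⟩ := exists_pairwise_disjoint_card_ge_of_lattice_packing hSconv hSsymm _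
    (b₂.pairwise_span_int (r := fun g g' => Disjoint (g +ᵥ S) (g' +ᵥ S)) hpack) V t
  refine ⟨P, W, hWV, hP, hW, ?_⟩
  simp only [setOf_exists_sum_smul_eq_parallelepiped,
    ← measure_congr (ZSpan.fundamentalDomain_ae_parallelepiped _ volume)]
  refine natCast_le_mul_toReal_div_mul_of_mul_le (hD₀ b₁) (hD b₁) (hD b₂) (by positivity) ?_
  calc (P.card : ℝ≥0∞) * volume (ZSpan.fundamentalDomain b₁)
      ≤ volume A := le_trans (by gcongr; exact_mod_cast hPu) hu
    _ = ENNReal.ofReal (2 ^ d) * volume ((2⁻¹ : ℝ) • A) := hA_half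
    _ ≤ ENNReal.ofReal (2 ^ d) * (W.card * volume (ZSpan.fundamentalDomain b₂)) :=
      by gcongr; exact ht.trans (by gcongr; exact_mod_cast hWt)

/-- Let `S` be a centrally symmetric convex body in `ℝ^d` (`d ≥ 2`). If the lattice
generated by the basis `b₁` gives a covering of `ℝ^d` by translates of `S`, and the
lattice generated by the basis `b₂` gives a packing by translates of `S`, then
for every finite family of translates of `S`,
`τ(F) ≤ 2^d · (covol(Λ₂)/covol(Λ₁)) · ν(F)`. -/
theorem piercing_translates_symmetric_lattice_bound
    (d : ℕ) (hd : 2 ≤ d)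
    (S : Set (EuclideanSpace ℝ (Fin d)))
    (hScompact : IsCompact S) (hSconv : Convex ℝ S)
    (hSint : (interior S).Nonempty) (hSsymm : S = -S)
    (b₁ b₂ : Module.Basis (Fin d) ℝ (EuclideanSpace ℝ (Fin d)))
    (hcover : ∀ x : EuclideanSpace ℝ (Fin d),
      ∃ c : Fin d → ℤ, x ∈ (∑ i, (c i : ℝ) • b₁ i) +ᵥ S)
    (hpack : ∀ c c' : Fin d → ℤ, c ≠ c' →
      Disjoint ((∑ i, (c i : ℝ) • b₂ i) +ᵥ S) ((∑ i, (c' i : ℝ) • b₂ i) +ᵥ S))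
    (V : Finset (EuclideanSpace ℝ (Fin d))) :
    ∃ P W : Finset (EuclideanSpace ℝ (Fin d)),
      W ⊆ V ∧
      (∀ v ∈ V, ∃ x ∈ P, x ∈ v +ᵥ S) ∧
      ((W : Set (EuclideanSpace ℝ (Fin d))).Pairwise fun u w =>
        Disjoint (u +ᵥ S) (w +ᵥ S)) ∧
      (P.card : ℝ) ≤ 2 ^ d *
        ((volume {x : EuclideanSpace ℝ (Fin d) | ∃ t : Fin d → ℝ,
            (∀ i, t i ∈ Set.Icc (0 : ℝ) 1) ∧ x = ∑ i, t i • b₂ i}).toReal /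
         (volume {x : EuclideanSpace ℝ (Fin d) | ∃ t : Fin d → ℝ,
            (∀ i, t i ∈ Set.Icc (0 : ℝ) 1) ∧ x = ∑ i, t i • b₁ i}).toReal) *
        (W.card : ℝ) :=
  piercing_translates_symmetric_lattice_bound_general d S hScompact hSconv hSsymm b₁ b₂ hcover hpack
    V
end

section
/- For every centrally symmetric convex body S in the plane ℝ² (S = −S) and every finite family F of translates of S, τ(F) ≤ (16/3) · ν(F). -/
/-!
The gauge of `S` is a norm whose closed unit ball is `S`, and two translates `u + S`, `w + S`
meet exactly when the two centres are at distance at most `2`. In a plane there are unit vectors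
`a`, `b` with `a - b` also a unit vector (intermediate value theorem on the connected set of
nonzero vectors). Writing vectors in the basis `a, b`, the half `{β ≥ 0}` of the ball of radius
`2` is covered by the four unit balls centred at `0`, `a + b`, `2b - a`, `b - 2a`: each of the
three cones spanned by consecutive vertices `a, b, b - a, -a` of the hexagon `±a, ±b, ±(b - a)`
is covered by the balls at `0` and at the sum of its two generators. Greedily take the translate
with the smallest `β`-coordinate of its centre, pierce every translate meeting it with four
points and recurse on the rest; this gives `τ ≤ 4ν ≤ 16/3 ν`.
-/

open Pointwise Topology Finset

namespace Seminorm

variable {E : Type*} [AddCommGroup E] [Module ℝ E] (p : Seminorm ℝ E)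

lemma map_smul_add_smul_le (a b : ℝ) (u v : E) :
    p (a • u + b • v) ≤ |a| * p u + |b| * p v := by
  simpa only [map_smul_eq_mul, Real.norm_eq_abs] using map_add_le_add p (a • u) (b • v)

lemma map_inv_smul_self {x : E} (hx : p x ≠ 0) : p ((p x)⁻¹ • x) = 1 := by
  rw [map_smul_eq_mul, Real.norm_eq_abs, abs_of_nonneg (inv_nonneg.2 (apply_nonneg p x)),
    inv_mul_cancel₀ hx]

lemma disjoint_closedBall_of_add_lt {x y : E} {r₁ r₂ : ℝ} (h : r₁ + r₂ < p (x - y)) :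
    Disjoint (p.closedBall x r₁) (p.closedBall y r₂) := by
  refine Set.disjoint_left.2 fun z hx hy => h.not_ge ?_
  rw [mem_closedBall] at hx hy
  calc p (x - y) = p ((z - y) - (z - x)) := by rw [sub_sub_sub_cancel_left]
    _ ≤ p (z - y) + p (z - x) := map_sub_le_add p _ _
    _ ≤ r₁ + r₂ := by linarith

def IsUnitTriangle (x y : E) : Prop :=
  p x = 1 ∧ p y = 1 ∧ p (x - y) = 1

namespace IsUnitTriangle

variable {p} {x y : E}

lemma symm (h : IsUnitTriangle p x y) : IsUnitTriangle p y x :=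
  ⟨h.2.1, h.1, by rw [map_sub_rev, h.2.2]⟩

lemma rotate (h : IsUnitTriangle p x y) : IsUnitTriangle p y (y - x) :=
  ⟨h.2.1, by rw [map_sub_rev, h.2.2], by rw [sub_sub_cancel, h.1]⟩

lemma le_map_smul_add_smul (h : IsUnitTriangle p x y) {s t : ℝ} (ht : 0 ≤ t) :
    s ≤ p (s • x + t • y) := by
  have := map_smul_add_smul_le p 1 t (s • x + t • y) (x - y)
  rw [show (1 : ℝ) • (s • x + t • y) + t • (x - y) = (s + t) • x by module, map_smul_eq_mul,
    Real.norm_eq_abs, h.1, h.2.2, abs_one, abs_of_nonneg ht] at this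
  linarith [le_abs_self (s + t)]

lemma map_smul_add_smul_sub_add_le_one (h : IsUnitTriangle p x y) {s t : ℝ}
    (hs : 0 ≤ s) (ht : 0 ≤ t) (h₁ : 1 ≤ p (s • x + t • y)) (h₂ : p (s • x + t • y) ≤ 2) :
    p (s • x + t • y - (x + y)) ≤ 1 := by
  have hs₂ : s ≤ 2 := (h.le_map_smul_add_smul ht).trans h₂
  have ht₂ : t ≤ 2 := (add_comm (s • x) (t • y) ▸ h.symm.le_map_smul_add_smul hs).trans h₂
  obtain ⟨hx, hy, hxy⟩ := h
  have hst : 1 ≤ s + t := h₁.trans <| by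
    simpa [hx, hy, abs_of_nonneg hs, abs_of_nonneg ht] using map_smul_add_smul_le p s t x y
  have of_combination : ∀ (a b : ℝ) (u v : E), p u = 1 → p v = 1 → |a| + |b| ≤ 1 →
      s • x + t • y - (x + y) = a • u + b • v → p (s • x + t • y - (x + y)) ≤ 1 := by
    intro a b u v hu hv hab e
    simpa [e, hu, hv] using (map_smul_add_smul_le p a b u v).trans (by rw [hu, hv]; linarith)
  rcases le_or_gt 2 (s + t) with hbig | hsmall
  · refine le_of_mul_le_mul_left ?_ (by linarith : 0 < s + t)
    calc (s + t) * p (s • x + t • y - (x + y))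
        = p ((s + t) • (s • x + t • y - (x + y))) := by
          rw [map_smul_eq_mul, Real.norm_eq_abs, abs_of_nonneg (by linarith)]
      _ = p ((s + t - 2) • (s • x + t • y) + (s - t) • (x - y)) := by congr 1; module
      _ ≤ |s + t - 2| * p (s • x + t • y) + |s - t| * p (x - y) := map_smul_add_smul_le p _ _ _ _
      _ ≤ (s + t - 2) * 2 + (4 - (s + t)) * 1 := by
          rw [abs_of_nonneg (by linarith : 0 ≤ s + t - 2), hxy]
          gcongr
          exact abs_sub_le_iff.2 ⟨by linarith, by linarith⟩
      _ ≤ (s + t) * 1 := by linarith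
  · rcases le_or_gt s 1 with hs₁ | hs₁
    · rcases le_or_gt t 1 with ht₁ | ht₁
      · exact of_combination (s - 1) (t - 1) x y hx hy
          (by rw [abs_of_nonpos (by linarith), abs_of_nonpos (by linarith)]; linarith) (by module)
      · exact of_combination (1 - t) (s + t - 2) (x - y) x hxy hx
          (by rw [abs_of_nonpos (by linarith), abs_of_nonpos (by linarith)]; linarith) (by module)
    · exact of_combination (s - 1) (s + t - 2) (x - y) y hxy hy
        (by rw [abs_of_nonneg (by linarith), abs_of_nonpos (by linarith)]; linarith) (by module)

lemma exists_sub_le_one [DecidableEq E] (h : IsUnitTriangle p x y) {α β : ℝ} (hβ : 0 ≤ β)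
    (hd : p (α • x + β • y) ≤ 2) :
    ∃ c ∈ ({0, x + y, 2 • y - x, y - 2 • x} : Finset E), p (α • x + β • y - c) ≤ 1 := by
  rcases le_or_gt (p (α • x + β • y)) 1 with hd₁ | hd₁
  · exact ⟨0, by simp, by simpa using hd₁⟩
  rcases le_or_gt 0 α with hα | hα
  · exact ⟨x + y, by simp, h.map_smul_add_smul_sub_add_le_one hα hβ hd₁.le hd⟩
  rcases le_or_gt 0 (α + β) with hαβ | hαβ
  · have e : α • x + β • y = (α + β) • y + (-α) • (y - x) := by module
    rw [e] at hd₁ hd ⊢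
    refine ⟨2 • y - x, by simp, ?_⟩
    convert h.rotate.map_smul_add_smul_sub_add_le_one hαβ (by linarith) hd₁.le hd using 2
    module
  · have e : α • x + β • y = β • (y - x) + (-(α + β)) • (y - x - y) := by module
    rw [e] at hd₁ hd ⊢
    refine ⟨y - 2 • x, by simp, ?_⟩
    convert h.rotate.rotate.map_smul_add_smul_sub_add_le_one hβ (by linarith) hd₁.le hd using 2
    module

lemma linearIndependent (h : IsUnitTriangle p x y) : LinearIndependent ℝ ![x, y] := by
  obtain ⟨hx, hy, hxy⟩ := h
  have hx₀ : x ≠ 0 := by rintro rfl; simp at hx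
  refine (LinearIndependent.pair_iff' hx₀).2 fun c hc => ?_
  subst hc
  rw [map_smul_eq_mul, hx, mul_one, Real.norm_eq_abs] at hy
  rw [show x - c • x = (1 - c) • x by module, map_smul_eq_mul, hx, mul_one,
    Real.norm_eq_abs] at hxy
  rcases (abs_eq zero_le_one).1 hy with rfl | rfl <;> norm_num at hxy

end IsUnitTriangle

def HalfBallCover (η : E →ₗ[ℝ] ℝ) (C : Finset E) : Prop :=
  ∀ d, p d ≤ 2 → 0 ≤ η d → ∃ c ∈ C, p (d - c) ≤ 1

variable {p} in
theorem HalfBallCover.exists_piercing {η : E →ₗ[ℝ] ℝ} {C : Finset E}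
    (hC : HalfBallCover p η C) (V : Finset E) :
    ∃ P W : Finset E, W ⊆ V ∧ (∀ v ∈ V, ∃ x ∈ P, x ∈ p.closedBall v 1) ∧
      (W : Set E).Pairwise (fun u w => Disjoint (p.closedBall u 1) (p.closedBall w 1)) ∧
      #P ≤ #C * #W := by
  classical
  induction V using Finset.strongInduction with | H V ih =>
  rcases V.eq_empty_or_nonempty with rfl | hV
  · exact ⟨∅, ∅, by simp⟩
  obtain ⟨u, huV, hu⟩ := V.exists_min_image η hV
  obtain ⟨P, W, hWV, hP, hW, hcard⟩ :=
    ih (V.filter fun v => 2 < p (v - u)) (filter_ssubset.2 ⟨u, huV, by simp⟩)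
  have huW : u ∉ W := fun h => absurd (mem_filter.1 (hWV h)).2 (by norm_num)
  refine ⟨P ∪ C.image (u + ·), insert u W,
    insert_subset huV (hWV.trans (filter_subset _ _)), fun v hv => ?_, ?_, ?_⟩
  · by_cases hfar : 2 < p (v - u)
    · obtain ⟨x, hx, hxv⟩ := hP v (mem_filter.2 ⟨hv, hfar⟩)
      exact ⟨x, mem_union_left _ hx, hxv⟩
    obtain ⟨c, hc, hvc⟩ :=
      hC (v - u) (not_lt.1 hfar) (by rw [map_sub, sub_nonneg]; exact hu v hv)
    refine ⟨u + c, mem_union_right _ (mem_image_of_mem _ hc), ?_⟩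
    rwa [mem_closedBall, ← map_neg_eq_map, neg_sub, sub_add_eq_sub_sub]
  · rw [coe_insert]
    refine hW.insert fun w hw _ => ?_
    have hdisj := p.disjoint_closedBall_of_add_lt (r₁ := 1) (r₂ := 1)
      (by norm_num; exact (mem_filter.1 (hWV hw)).2)
    exact ⟨hdisj.symm, hdisj⟩
  · calc #(P ∪ C.image (u + ·)) ≤ #P + #C := (card_union_le _ _).trans (by grw [card_image_le])
      _ ≤ #C * #W + #C := by grw [hcard]
      _ = #C * #(insert u W) := by rw [card_insert_of_notMem huW, mul_add_one]

variable [TopologicalSpace E] [IsTopologicalAddGroup E] [ContinuousSMul ℝ E]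

theorem exists_isUnitTriangle (hE : 1 < Module.rank ℝ E) (hp : Continuous p)
    (hp₀ : ∀ x, p x = 0 → x = 0) : ∃ x y, IsUnitTriangle p x y := by
  have : Nontrivial E := rank_pos_iff_nontrivial.1 (zero_lt_one.trans hE)
  obtain ⟨v, hv⟩ := exists_ne (0 : E)
  have hpne : ∀ w : E, w ≠ 0 → p w ≠ 0 := fun w hw h => hw (hp₀ w h)
  let f : E → ℝ := fun w => p ((p v)⁻¹ • v - (p w)⁻¹ • w)
  have hf : ContinuousOn f {0}ᶜ :=
    hp.comp_continuousOn <| continuousOn_const.sub <|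
      (hp.continuousOn.inv₀ fun w hw => hpne w hw).smul continuousOn_id
  have hfv : f v = 0 := by simp [f]
  have hfnv : f (-v) = 2 := by
    simp only [f, map_neg_eq_map, smul_neg, sub_neg_eq_add, ← two_smul ℝ, map_smul_eq_mul,
      map_inv_smul_self p (hpne v hv)]
    norm_num
  obtain ⟨w, hw, hfw⟩ := (isConnected_compl_singleton_of_one_lt_rank hE 0).isPreconnected
    |>.intermediate_value hv (neg_ne_zero.2 hv) hf ⟨hfv.symm ▸ zero_le_one, hfnv.symm ▸ one_le_two⟩
  exact ⟨_, _, map_inv_smul_self p (hpne v hv), map_inv_smul_self p (hpne w hw), hfw⟩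

theorem exists_halfBallCover_card_le_four (hE : Module.finrank ℝ E = 2) (hp : Continuous p)
    (hp₀ : ∀ x, p x = 0 → x = 0) :
    ∃ (η : E →ₗ[ℝ] ℝ) (C : Finset E), #C ≤ 4 ∧ HalfBallCover p η C := by
  classical
  obtain ⟨x, y, h⟩ := p.exists_isUnitTriangle
    (Module.one_lt_rank_of_one_lt_finrank (by rw [hE]; norm_num)) hp hp₀
  let B := basisOfLinearIndependentOfCardEqFinrank h.linearIndependent (by simp [hE])
  refine ⟨B.coord 1, {0, x + y, 2 • y - x, y - 2 • x}, card_le_four, fun d hd hηd => ?_⟩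
  have hrepr : d = B.repr d 0 • x + B.repr d 1 • y := by
    conv_lhs => rw [← B.sum_repr d]
    simp [B, Fin.sum_univ_two]
  rw [hrepr] at hd ⊢
  exact h.exists_sub_le_one hηd hd

end Seminorm

theorem exists_seminorm_closedBall_eq {E : Type*} [NormedAddCommGroup E] [NormedSpace ℝ E]
    {S : Set E} (hclosed : IsClosed S) (hbdd : Bornology.IsBounded S) (hconv : Convex ℝ S)
    (hint : (interior S).Nonempty) (hneg : ∀ x ∈ S, -x ∈ S) :
    ∃ p : Seminorm ℝ E, Continuous p ∧ (∀ x, p x = 0 → x = 0) ∧ p.closedBall 0 1 = S := by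
  obtain ⟨x, hx⟩ := hint
  have hx' : -x ∈ interior S :=
    interior_maximal (fun y hy => by simpa using hneg _ (interior_subset hy)) isOpen_interior.neg
      (by simpa using hx)
  have h₀ : S ∈ 𝓝 0 := by
    refine mem_interior_iff_mem_nhds.1 ?_
    simpa using hconv.interior hx hx' (by norm_num : (0 : ℝ) ≤ 1 / 2)
      (by norm_num : (0 : ℝ) ≤ 1 / 2) (by norm_num)
  have habs : Absorbent ℝ S := absorbent_nhds_zero h₀
  refine ⟨gaugeSeminorm ((balanced_iff_neg_mem hconv).2 hneg) hconv habs,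
    continuous_gauge hconv h₀, fun y hy => ?_, ?_⟩
  · by_contra hy₀
    exact ((gauge_pos habs (NormedSpace.isVonNBounded_of_isBounded ℝ hbdd)).2 hy₀).ne' hy
  · ext y
    rw [Seminorm.mem_closedBall_zero, gaugeSeminorm_toFun, gauge_le_one_iff_mem_closure hconv h₀,
      hclosed.closure_eq]

/-- For every centrally symmetric convex body `S` in the plane and every finite family of
translates of `S`, `τ(F) ≤ (16/3) · ν(F)`. -/
theorem piercing_translates_symmetric_planar
    (S : Set (EuclideanSpace ℝ (Fin 2)))
    (hScompact : IsCompact S) (hSconv : Convex ℝ S)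
    (hSint : (interior S).Nonempty) (hSsymm : S = -S)
    (V : Finset (EuclideanSpace ℝ (Fin 2))) :
    ∃ P W : Finset (EuclideanSpace ℝ (Fin 2)),
      W ⊆ V ∧
      (∀ v ∈ V, ∃ x ∈ P, x ∈ v +ᵥ S) ∧
      ((W : Set (EuclideanSpace ℝ (Fin 2))).Pairwise fun u w =>
        Disjoint (u +ᵥ S) (w +ᵥ S)) ∧
      (P.card : ℝ) ≤ 16 / 3 * (W.card : ℝ) := by
  obtain ⟨p, hp, hp₀, hpS⟩ := exists_seminorm_closedBall_eq hScompact.isClosed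
    hScompact.isBounded hSconv hSint fun x hx => hSsymm ▸ Set.neg_mem_neg.2 hx
  have htranslate : ∀ v, v +ᵥ S = p.closedBall v 1 := fun v => by
    rw [← hpS, Seminorm.vadd_closedBall, vadd_eq_add, add_zero]
  obtain ⟨η, C, hC₄, hC⟩ := p.exists_halfBallCover_card_le_four finrank_euclideanSpace_fin hp hp₀
  obtain ⟨P, W, hWV, hP, hW, hcard⟩ := hC.exists_piercing V
  simp only [htranslate]
  refine ⟨P, W, hWV, hP, hW, ?_⟩
  have h₄ : (#P : ℝ) ≤ 4 * #W := by exact_mod_cast hcard.trans (Nat.mul_le_mul_right _ hC₄)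
  linarith [(#W).cast_nonneg (α := ℝ)]
end

section
/- Let S be a centrally symmetric convex body in ℝ^d with S = −S, and let Λ be a lattice in ℝ^d such that the translates {S + λ : λ ∈ Λ} are pairwise disjoint. Then for every finite family F of translates of S, ν(F) ≥ vol(⋃F) / (2^d · covol(Λ)), where vol(⋃F) is the Lebesgue volume of the union of the members of F. (Equivalently, ν(F) ≥ (δ/2^d) · vol(⋃F)/vol(S) where δ = vol(S)/covol(Λ) is the density of the lattice packing.) -/
/-!
Let `U` be the union of the family and `W` a largest packing subfamily. If a point lies in
`2a + v + S` and in `2a' + v' + S` for distinct lattice points `a, a'`, then `v + S` and `v' + S`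
are disjoint: otherwise `2(a - a')` lies in `(S - S) + (S - S) = 2(S - S)`, so `a + S` and `a' + S`
meet. Hence every point lies in at most `|W|` of the translates `g + U/2`, `g ∈ Λ`, and integrating
over a fundamental domain of `Λ` gives `vol(U/2) ≤ |W| covol(Λ)`, i.e. `vol U ≤ 2^d |W| covol(Λ)`.
-/

open Pointwise MeasureTheory

namespace MeasureTheory.IsAddFundamentalDomain

variable {G α : Type*} [AddGroup G] [Countable G] [AddAction G α] [MeasurableSpace α]
  [MeasurableConstVAdd G α] {μ : Measure α} [VAddInvariantMeasure G α μ] {s t : Set α}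

theorem measure_le_mul_of_encard_le (hs : IsAddFundamentalDomain G s μ)
    (ht : NullMeasurableSet t μ) {m : ℕ} (hm : ∀ x ∈ s, {g : G | x ∈ g +ᵥ t}.encard ≤ m) :
    μ t ≤ m * μ s := by
  have ht' (g : G) : NullMeasurableSet (g +ᵥ t) (μ.restrict s) :=
    (ht.vadd g).mono Measure.restrict_le_self
  calc μ t = ∑' g : G, ∫⁻ x in s, (g +ᵥ t).indicator 1 x ∂μ := by
        rw [hs.measure_eq_tsum t]
        refine tsum_congr fun g => ?_
        rw [lintegral_indicator_one₀ (ht' g), Measure.restrict_apply₀ (ht' g)]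
    _ = ∫⁻ x in s, ({g : G | x ∈ g +ᵥ t}.encard : ENNReal) ∂μ := by
        rw [← lintegral_tsum (f := fun g => (g +ᵥ t).indicator 1)
          fun g => aemeasurable_one.indicator₀ (ht' g)]
        refine lintegral_congr fun x => ?_
        rw [← ENNReal.tsum_set_one, tsum_subtype _ fun _ => (1 : ENNReal)]
        rfl
    _ ≤ ∫⁻ _ in s, (m : ENNReal) ∂μ :=
        setLIntegral_mono measurable_const fun x hx => by exact_mod_cast hm x hx
    _ = m * μ s := setLIntegral_const _ _

end MeasureTheory.IsAddFundamentalDomain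

theorem Finset.exists_pairwiseDisjoint_card_max {α β : Type*} [PartialOrder β] [OrderBot β]
    (V : Finset α) (A : α → β) :
    ∃ W ⊆ V, (W : Set α).PairwiseDisjoint A ∧
      ∀ W' ⊆ V, (W' : Set α).PairwiseDisjoint A → W'.card ≤ W.card := by
  classical
  obtain ⟨W, hW, hmax⟩ := Finset.exists_max_image
    (V.powerset.filter fun W : Finset α => (W : Set α).PairwiseDisjoint A) Finset.card
    ⟨∅, by simp⟩
  simp only [Finset.mem_filter, Finset.mem_powerset] at hW hmax
  exact ⟨W, hW.1, hW.2, fun W' hW'V hW' => hmax W' ⟨hW'V, hW'⟩⟩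

theorem Set.encard_le_of_pairwiseDisjoint_comp {ι α β : Type*} [PartialOrder β] [OrderBot β]
    {V : Finset α} {A : α → β} {m : ℕ}
    (hV : ∀ W ⊆ V, (W : Set α).PairwiseDisjoint A → W.card ≤ m) {T : Set ι} {f : ι → α}
    (hfV : ∀ i ∈ T, f i ∈ V) (hne : ∀ i ∈ T, A (f i) ≠ ⊥) (hdisj : T.PairwiseDisjoint (A ∘ f)) :
    T.encard ≤ m := by
  have hinj : T.InjOn f := fun i hi j hj hij => by
    by_contra hij'
    have := hdisj hi hj hij'
    simp only [Function.onFun, Function.comp_apply, hij, disjoint_self] at this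
    exact hne j hj this
  have hfin : (f '' T).Finite := V.finite_toSet.subset (Set.image_subset_iff.2 hfV)
  rw [← hinj.encard_image, hfin.encard_eq_coe_toFinset_card, Nat.cast_le]
  refine hV _ (fun a ha => ?_) ?_
  · obtain ⟨i, hi, rfl⟩ := (hfin.mem_toFinset).1 ha
    exact hfV i hi
  · rw [hfin.coe_toFinset, hinj.pairwiseDisjoint_image]
    exact hdisj

section Convex

variable {E : Type*} [AddCommGroup E] [Module ℝ E] {S : Set E}

theorem Convex.disjoint_vadd_of_mem_two_smul_add_vadd (hconv : Convex ℝ S) {a a' v v' x : E}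
    (ha : Disjoint (a +ᵥ S) (a' +ᵥ S)) (hx : x ∈ ((2 : ℝ) • a + v) +ᵥ S)
    (hx' : x ∈ ((2 : ℝ) • a' + v') +ᵥ S) : Disjoint (v +ᵥ S) (v' +ᵥ S) := by
  rw [Set.disjoint_left]
  rintro _ ⟨s₃, hs₃, rfl⟩ ⟨s₄, hs₄, hy⟩
  obtain ⟨s₁, hs₁, rfl⟩ := hx
  obtain ⟨s₂, hs₂, hx'⟩ := hx'
  simp only [vadd_eq_add] at hy hx'
  have h₀ : (0 : ℝ) ≤ 1 / 2 := by norm_num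
  have hp := hconv hs₃ hs₂ h₀ h₀ (add_halves 1)
  have hq := hconv hs₁ hs₄ h₀ h₀ (add_halves 1)
  refine Set.disjoint_left.mp ha (Set.vadd_mem_vadd_set hq) ?_
  convert Set.vadd_mem_vadd_set (a := a') hp using 1
  simp only [vadd_eq_add]
  linear_combination (norm := module) (1/2 : ℝ) • hy - (1/2 : ℝ) • hx'

theorem Convex.encard_setOf_mem_vadd_half_le (hconv : Convex ℝ S) {Λ : AddSubgroup E}
    (hΛ : (Λ : Set E).PairwiseDisjoint (· +ᵥ S)) {V : Finset E} {m : ℕ}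
    (hV : ∀ W ⊆ V, (W : Set E).PairwiseDisjoint (· +ᵥ S) → W.card ≤ m) (x : E) :
    {g : Λ | x ∈ g +ᵥ (2⁻¹ : ℝ) • ⋃ v ∈ V, v +ᵥ S}.encard ≤ m := by
  have hmem (g : Λ) (hg : x ∈ g +ᵥ (2⁻¹ : ℝ) • ⋃ v ∈ V, v +ᵥ S) :
      ∃ v ∈ V, (2 : ℝ) • x ∈ ((2 : ℝ) • (g : E) + v) +ᵥ S := by
    simp only [Set.mem_vadd_set_iff_neg_vadd_mem, Set.mem_inv_smul_set_iff₀ (two_ne_zero' ℝ),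
      Set.mem_iUnion₂] at hg
    obtain ⟨v, hv, hgv⟩ := hg
    refine ⟨v, hv, ?_⟩
    rw [Set.mem_vadd_set_iff_neg_vadd_mem]
    convert hgv using 1
    simp only [vadd_eq_add, AddSubgroup.vadd_def, AddSubgroup.coe_neg]
    module
  choose! f hfV hf using hmem
  have hne (g : Λ) (hg : x ∈ g +ᵥ (2⁻¹ : ℝ) • ⋃ v ∈ V, v +ᵥ S) : f g +ᵥ S ≠ ∅ :=
    (Set.vadd_set_nonempty.2 (Set.vadd_set_nonempty.1 ⟨_, hf g hg⟩)).ne_empty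
  refine Set.encard_le_of_pairwiseDisjoint_comp hV hfV hne fun g hg g' hg' hgg' => ?_
  exact hconv.disjoint_vadd_of_mem_two_smul_add_vadd
    (hΛ g.2 g'.2 (Subtype.coe_injective.ne hgg')) (hf g hg) (hf g' hg')

end Convex

theorem Submodule.pairwiseDisjoint_vadd_span_int_range {ι E : Type*} [Fintype ι] [AddCommGroup E]
    [Module ℝ E] {b : ι → E} {S : Set E}
    (hpack : ∀ c c' : ι → ℤ, c ≠ c' →
      Disjoint ((∑ i, (c i : ℝ) • b i) +ᵥ S) ((∑ i, (c' i : ℝ) • b i) +ᵥ S)) :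
    (Submodule.span ℤ (Set.range b) : Set E).PairwiseDisjoint (· +ᵥ S) := by
  rintro _ ha _ ha' hne
  obtain ⟨c, rfl⟩ := (Submodule.mem_span_range_iff_exists_fun ℤ).1 ha
  obtain ⟨c', rfl⟩ := (Submodule.mem_span_range_iff_exists_fun ℤ).1 ha'
  simpa only [Int.cast_smul_eq_zsmul] using hpack c c' (by rintro rfl; exact hne rfl)

theorem setOf_exists_eq_sum_smul_eq_parallelepiped {ι E : Type*} [Fintype ι] [AddCommGroup E]
    [Module ℝ E] (b : ι → E) :
    {x : E | ∃ t : ι → ℝ, (∀ i, t i ∈ Set.Icc (0 : ℝ) 1) ∧ x = ∑ i, t i • b i} =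
      parallelepiped b := by
  ext x
  simp [mem_parallelepiped_iff, Set.mem_Icc, Pi.le_def, forall_and]

theorem packing_translates_lattice_packing_bound_general
    (d : ℕ)
    (S : Set (EuclideanSpace ℝ (Fin d)))
    (hSconv : Convex ℝ S)
    (b : Module.Basis (Fin d) ℝ (EuclideanSpace ℝ (Fin d)))
    (hpack : ∀ c c' : Fin d → ℤ, c ≠ c' →
      Disjoint ((∑ i, (c i : ℝ) • b i) +ᵥ S) ((∑ i, (c' i : ℝ) • b i) +ᵥ S))
    (V : Finset (EuclideanSpace ℝ (Fin d))) :
    ∃ W : Finset (EuclideanSpace ℝ (Fin d)),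
      W ⊆ V ∧
      ((W : Set (EuclideanSpace ℝ (Fin d))).Pairwise fun u w =>
        Disjoint (u +ᵥ S) (w +ᵥ S)) ∧
      (volume (⋃ v ∈ V, v +ᵥ S)).toReal /
        (2 ^ d * (volume {x : EuclideanSpace ℝ (Fin d) | ∃ t : Fin d → ℝ,
          (∀ i, t i ∈ Set.Icc (0 : ℝ) 1) ∧ x = ∑ i, t i • b i}).toReal) ≤
        (W.card : ℝ) := by
  obtain ⟨W, hWV, hW, hWmax⟩ := V.exists_pairwiseDisjoint_card_max (· +ᵥ S)
  refine ⟨W, hWV, hW, ?_⟩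
  set U := ⋃ v ∈ V, v +ᵥ S
  have hU : NullMeasurableSet U volume :=
    .biUnion V.countable_toSet fun v _ => (hSconv.vadd v).nullMeasurableSet (μ := volume)
  -- `Countable` is only inferred for the submodule, not for its underlying subgroup.
  have : Countable (Submodule.span ℤ (Set.range b)).toAddSubgroup :=
    inferInstanceAs (Countable (Submodule.span ℤ (Set.range b)))
  have hhalf : volume ((2⁻¹ : ℝ) • U) ≤ W.card * volume (parallelepiped b) := by
    rw [← measure_congr (ZSpan.fundamentalDomain_ae_parallelepiped b volume)]
    have hcount (x) := hSconv.encard_setOf_mem_vadd_half_le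
      (Λ := (Submodule.span ℤ (Set.range b)).toAddSubgroup)
      (Submodule.pairwiseDisjoint_vadd_span_int_range hpack) hWmax x
    exact (ZSpan.isAddFundamentalDomain' b volume).measure_le_mul_of_encard_le
      (Measure.NullMeasurableSet.const_smul hU _) fun x _ => hcount x
  have hvol : volume U ≤ 2 ^ d * (W.card * volume (parallelepiped b)) :=
    calc volume U = volume ((2 : ℝ) • (2⁻¹ : ℝ) • U) := by rw [smul_inv_smul₀ two_ne_zero]
      _ = 2 ^ d * volume ((2⁻¹ : ℝ) • U) := by
        rw [Measure.addHaar_smul, finrank_euclideanSpace_fin, abs_of_pos (by positivity),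
          ENNReal.ofReal_pow zero_le_two, ENNReal.ofReal_ofNat]
      _ ≤ _ := by gcongr
  have hfin : volume (parallelepiped b) ≠ ⊤ := by
    rw [← Module.Basis.coe_parallelepiped]
    exact b.parallelepiped.isCompact.measure_lt_top.ne
  rw [setOf_exists_eq_sum_smul_eq_parallelepiped]
  refine div_le_of_le_mul₀ (by positivity) W.card.cast_nonneg ?_
  calc (volume U).toReal ≤ (2 ^ d * (W.card * volume (parallelepiped b))).toReal :=
        ENNReal.toReal_mono (by finiteness) hvol
    _ = _ := by
      simp only [ENNReal.toReal_mul, ENNReal.toReal_pow, ENNReal.toReal_natCast,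
        ENNReal.toReal_ofNat]
      ring

/-- Let `S` be a centrally symmetric convex body in `ℝ^d`, and suppose the lattice
generated by the basis `b` gives a packing of `ℝ^d` by translates of `S`. Then for every
finite family `F` of translates of `S`, `ν(F) ≥ vol(⋃F)/(2^d · covol(Λ))`. -/
theorem packing_translates_lattice_packing_bound
    (d : ℕ)
    (S : Set (EuclideanSpace ℝ (Fin d)))
    (hScompact : IsCompact S) (hSconv : Convex ℝ S)
    (hSint : (interior S).Nonempty) (hSsymm : S = -S)
    (b : Module.Basis (Fin d) ℝ (EuclideanSpace ℝ (Fin d)))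
    (hpack : ∀ c c' : Fin d → ℤ, c ≠ c' →
      Disjoint ((∑ i, (c i : ℝ) • b i) +ᵥ S) ((∑ i, (c' i : ℝ) • b i) +ᵥ S))
    (V : Finset (EuclideanSpace ℝ (Fin d))) :
    ∃ W : Finset (EuclideanSpace ℝ (Fin d)),
      W ⊆ V ∧
      ((W : Set (EuclideanSpace ℝ (Fin d))).Pairwise fun u w =>
        Disjoint (u +ᵥ S) (w +ᵥ S)) ∧
      (volume (⋃ v ∈ V, v +ᵥ S)).toReal /
        (2 ^ d * (volume {x : EuclideanSpace ℝ (Fin d) | ∃ t : Fin d → ℝ,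
          (∀ i, t i ∈ Set.Icc (0 : ℝ) 1) ∧ x = ∑ i, t i • b i}).toReal) ≤
        (W.card : ℝ) :=
  packing_translates_lattice_packing_bound_general d S hSconv b hpack V
end

section
/- Let C be a convex body in ℝ^d and let A and B be centrally symmetric convex bodies in ℝ^d (A = −A, B = −B) with A ⊆ C ⊆ B. Suppose Λ_A is a lattice such that the translates {A + λ : λ ∈ Λ_A} cover ℝ^d, and Λ_B is a lattice such that the translates {B + μ : μ ∈ Λ_B} are pairwise disjoint. Then for every finite family F of translates of C, τ(F) ≤ 2^d · (covol(Λ_B) / covol(Λ_A)) · ν(F). (This equals the bound 2^d · (vol(B)/vol(A)) · θ/δ, where θ = vol(A)/covol(Λ_A) is the density of the lattice covering by A and δ = vol(B)/covol(Λ_B) is the density of the lattice packing by B.) -/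
open Pointwise MeasureTheory
open scoped ENNReal

/-!
Let `U` be the union of the translates `v + A`, `v ∈ V`, and `ν` the packing number of the family
`{v + C}`. The translates of `U` by the lattice `2Λ_B` cover every point at most `ν` times: if the
points `x + g ≠ x + g'` (`g, g' ∈ 2Λ_B`) lie in `v + C` and `v' + C` and these translates meet,
then `(g' - g) / 2` is a nonzero point of `Λ_B` in `B - B`, by convexity of `B`, contradicting the
packing. Hence `vol U ≤ 2^d ν covol Λ_B`. On the other side, averaging over a fundamental domain of
`Λ_A` gives a shift `t` with `#((t + Λ_A) ∩ U) · covol Λ_A ≤ vol U`, and since the translates of `A`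
by `Λ_A` cover the space, `(t + Λ_A) ∩ U` meets every `v + A ⊆ v + C`.
-/

section Lattice

variable {ι E : Type*} [Fintype ι] [AddCommGroup E] [Module ℝ E]

def IsLatticeCovering (b : ι → E) (A : Set E) : Prop :=
  ∀ x : E, ∃ c : ι → ℤ, x ∈ (∑ i, (c i : ℝ) • b i) +ᵥ A

def IsLatticePacking (b : ι → E) (B : Set E) : Prop :=
  ∀ c c' : ι → ℤ, c ≠ c' →
    Disjoint ((∑ i, (c i : ℝ) • b i) +ᵥ B) ((∑ i, (c' i : ℝ) • b i) +ᵥ B)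

theorem mem_span_int_range_iff (b : ι → E) {x : E} :
    x ∈ Submodule.span ℤ (Set.range b) ↔ ∃ c : ι → ℤ, ∑ i, (c i : ℝ) • b i = x := by
  simp only [Submodule.mem_span_range_iff_exists_fun, Int.cast_smul_eq_zsmul]

theorem IsLatticePacking.notMem_sub {b : ι → E} {B : Set E} (hpack : IsLatticePacking b B)
    {g : E} (hg : g ∈ Submodule.span ℤ (Set.range b)) (hg₀ : g ≠ 0) : g ∉ B - B := by
  obtain ⟨c, rfl⟩ := (mem_span_int_range_iff b).1 hg
  rintro ⟨b₁, hb₁, b₂, hb₂, hsub⟩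
  have hc : c ≠ 0 := by rintro rfl; simp at hg₀
  have hb₁' : b₁ ∈ (∑ i, (c i : ℝ) • b i) +ᵥ B := ⟨b₂, hb₂, by
    simp only [vadd_eq_add] at hsub ⊢
    rw [← hsub]
    abel⟩
  exact Set.disjoint_left.1 (hpack c 0 hc) hb₁' (by simpa using hb₁)

theorem IsLatticeCovering.exists_mem_span_add_mem_vadd {b : ι → E} {A : Set E}
    (hcover : IsLatticeCovering b A) (t v : E) :
    ∃ g ∈ Submodule.span ℤ (Set.range b), g + t ∈ v +ᵥ A := by
  obtain ⟨c, a, ha, hca⟩ := hcover (t - v)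
  refine ⟨-∑ i, (c i : ℝ) • b i, neg_mem ((mem_span_int_range_iff b).2 ⟨c, rfl⟩), a, ha, ?_⟩
  simp only [vadd_eq_add] at hca ⊢
  rw [eq_sub_iff_add_eq] at hca
  rw [← hca]
  abel

theorem setOf_sum_smul_mem_Icc_eq_parallelepiped (v : ι → E) :
    {x | ∃ t : ι → ℝ, (∀ i, t i ∈ Set.Icc (0 : ℝ) 1) ∧ x = ∑ i, t i • v i} = parallelepiped v := by
  ext x
  simp only [mem_parallelepiped_iff, Set.mem_ofPred_eq, Set.mem_Icc, Pi.le_def, forall_and]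
  rfl

end Lattice

instance {ι E : Type*} [Countable ι] [AddCommGroup E] (b : ι → E) :
    Countable (Submodule.span ℤ (Set.range b)).toAddSubgroup :=
  inferInstanceAs (Countable (Submodule.span ℤ (Set.range b)))

theorem Finset.exists_subset_pairwiseDisjoint_forall_card_le {α β : Type*} (V : Finset α)
    (f : α → Set β) :
    ∃ W ⊆ V, (W : Set α).PairwiseDisjoint f ∧
      ∀ S ⊆ V, (S : Set α).PairwiseDisjoint f → S.card ≤ W.card := by
  classical
  obtain ⟨W, hW, hmax⟩ := Finset.exists_max_image
    (V.powerset.filter fun S : Finset α => (S : Set α).PairwiseDisjoint f) Finset.card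
    ⟨∅, Finset.mem_filter.2 ⟨Finset.empty_mem_powerset V, by simp⟩⟩
  simp only [Finset.mem_filter, Finset.mem_powerset] at hW hmax
  exact ⟨W, hW.1, hW.2, fun S hSV hS => hmax S ⟨hSV, hS⟩⟩

section Translates

variable {E : Type*} [AddCommGroup E] {C : Set E} {V : Finset E} {k : ℕ}

theorem encard_le_of_subset_iUnion_vadd (hC : C.Nonempty)
    (hk : ∀ S ⊆ V, (S : Set E).PairwiseDisjoint (· +ᵥ C) → S.card ≤ k) {P : Set E}
    (hPV : P ⊆ ⋃ v ∈ V, v +ᵥ C) (hP : P.Pairwise fun p q => q - p ∉ (C - C) + (C - C)) :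
    P.encard ≤ k := by
  classical
  choose! f hfV hfC using fun p (hp : p ∈ P) => by simpa using hPV hp
  have hdisj : P.Pairwise fun p q => Disjoint (f p +ᵥ C) (f q +ᵥ C) := by
    intro p hp q hq hpq
    refine Set.disjoint_left.2 fun z hzp hzq => hP hp hq hpq ?_
    obtain ⟨c₁, hc₁, hz₁⟩ := hzp
    obtain ⟨c₂, hc₂, hz₂⟩ := hzq
    obtain ⟨c₃, hc₃, hp₃⟩ := hfC p hp
    obtain ⟨c₄, hc₄, hq₄⟩ := hfC q hq
    refine ⟨c₁ - c₂, Set.sub_mem_sub hc₁ hc₂, c₄ - c₃, Set.sub_mem_sub hc₄ hc₃, ?_⟩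
    simp only [vadd_eq_add] at hz₁ hz₂ hp₃ hq₄
    rw [← hp₃, ← hq₄, eq_sub_of_add_eq hz₁, eq_sub_of_add_eq hz₂]
    beta_reduce
    abel
  have hinj : P.InjOn f := by
    intro p hp q hq hfpq
    by_contra hpq
    obtain ⟨c, hc⟩ := hC
    exact Set.disjoint_left.1 (hdisj hp hq hpq) (Set.vadd_mem_vadd_set hc)
      (hfpq ▸ Set.vadd_mem_vadd_set hc)
  set S := V.filter (· ∈ f '' P)
  have hS : (S : Set E) = f '' P := by
    ext v
    simp only [S, Finset.coe_filter, Set.mem_ofPred_eq, and_iff_right_iff_imp]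
    rintro ⟨p, hp, rfl⟩
    exact hfV p hp
  rw [← hinj.encard_image, ← hS, Set.encard_coe_eq_coe_finsetCard, Nat.cast_le]
  refine hk S (Finset.filter_subset _ _) ?_
  rw [hS]
  rintro _ ⟨p, hp, rfl⟩ _ ⟨q, hq, rfl⟩ hne
  exact hdisj hp hq fun h => hne (h ▸ rfl)

variable [Module ℝ E] {B : Set E}

theorem two_smul_notMem_sub_add_sub (hB : Convex ℝ B) {x : E} (hx : x ∉ B - B) :
    (2 : ℝ) • x ∉ (B - B) + (B - B) := by
  rintro ⟨_, ⟨b₁, hb₁, b₂, hb₂, rfl⟩, _, ⟨b₃, hb₃, b₄, hb₄, rfl⟩, h⟩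
  refine hx ⟨(2⁻¹ : ℝ) • b₁ + (2⁻¹ : ℝ) • b₃, hB hb₁ hb₃ (by norm_num) (by norm_num) (by norm_num),
    (2⁻¹ : ℝ) • b₂ + (2⁻¹ : ℝ) • b₄, hB hb₂ hb₄ (by norm_num) (by norm_num) (by norm_num), ?_⟩
  have hx : x = (2⁻¹ : ℝ) • ((2 : ℝ) • x) := by rw [smul_smul]; norm_num
  rw [hx, ← h]
  module

theorem encard_vadd_mem_inv_two_smul_le (hB : Convex ℝ B) (hCB : C ⊆ B) (hC : C.Nonempty)
    {L : AddSubgroup E} (hL : ∀ g ∈ L, g ≠ 0 → g ∉ B - B)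
    (hk : ∀ S ⊆ V, (S : Set E).PairwiseDisjoint (· +ᵥ C) → S.card ≤ k)
    {U : Set E} (hU : U ⊆ ⋃ v ∈ V, v +ᵥ C) (x : E) :
    {g : L | g +ᵥ x ∈ (2 : ℝ)⁻¹ • U}.encard ≤ k := by
  set f : L → E := fun g => (2 : ℝ) • ((g : E) + x)
  have hf : f.Injective := fun g g' h => Subtype.ext (by simpa [f] using h)
  rw [← hf.injOn.encard_image]
  refine encard_le_of_subset_iUnion_vadd hC hk ?_ ?_
  · rintro _ ⟨g, hg, rfl⟩
    exact hU ((Set.mem_inv_smul_set_iff₀ two_ne_zero _ _).1 hg)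
  · rintro _ ⟨g, -, rfl⟩ _ ⟨g', -, rfl⟩ hne h
    have hgg' : (g' : E) - g ≠ 0 := sub_ne_zero.2 fun h' => hne (by rw [Subtype.ext h'])
    refine two_smul_notMem_sub_add_sub hB (hL _ (L.sub_mem g'.2 g.2) hgg') ?_
    have hsub := Set.add_subset_add (Set.sub_subset_sub hCB hCB) (Set.sub_subset_sub hCB hCB)
    convert hsub h using 1
    simp only [f, smul_sub, smul_add]
    abel

end Translates

namespace MeasureTheory.IsAddFundamentalDomain

variable {G α : Type*} [AddGroup G] [AddAction G α] {s U : Set α}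

theorem tsum_indicator_vadd_eq_encard (U : Set α) (x : α) :
    ∑' g : G, U.indicator 1 (g +ᵥ x) = ({g : G | g +ᵥ x ∈ U}.encard : ℝ≥0∞) := by
  rw [← ENNReal.tsum_set_one, tsum_subtype {g : G | g +ᵥ x ∈ U} fun _ => (1 : ℝ≥0∞)]
  rfl

variable [Countable G] [MeasurableSpace α] [MeasurableConstVAdd G α] {μ : Measure α}
  [VAddInvariantMeasure G α μ]

theorem measurable_encard_vadd_mem (hU : MeasurableSet U) :
    Measurable fun x => ({g : G | g +ᵥ x ∈ U}.encard : ℝ≥0∞) := by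
  simp_rw [← tsum_indicator_vadd_eq_encard]
  exact Measurable.tsum fun g => (measurable_one.indicator hU).comp (measurable_const_vadd g)

theorem measure_eq_setLIntegral_encard (h : IsAddFundamentalDomain G s μ) (hU : MeasurableSet U) :
    μ U = ∫⁻ x in s, {g : G | g +ᵥ x ∈ U}.encard ∂μ := by
  calc μ U = ∫⁻ x, U.indicator 1 x ∂μ := (lintegral_indicator_one hU).symm
    _ = ∑' g : G, ∫⁻ x in s, U.indicator 1 (g +ᵥ x) ∂μ := h.lintegral_eq_tsum'' _
    _ = ∫⁻ x in s, ∑' g : G, U.indicator 1 (g +ᵥ x) ∂μ :=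
      (lintegral_tsum fun g => ((measurable_one.indicator hU).comp
        (measurable_const_vadd g)).aemeasurable).symm
    _ = _ := by simp_rw [tsum_indicator_vadd_eq_encard]

theorem measure_le_mul_of_encard_le_s8 (h : IsAddFundamentalDomain G s μ) (hU : MeasurableSet U)
    {k : ℕ∞} (hk : ∀ x, {g : G | g +ᵥ x ∈ U}.encard ≤ k) : μ U ≤ k * μ s := by
  calc μ U = ∫⁻ x in s, {g : G | g +ᵥ x ∈ U}.encard ∂μ := h.measure_eq_setLIntegral_encard hU
    _ ≤ ∫⁻ _ in s, (k : ℝ≥0∞) ∂μ := lintegral_mono fun x => ENat.toENNReal_le.2 (hk x)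
    _ = k * μ s := setLIntegral_const s _

theorem exists_encard_mul_le_measure (h : IsAddFundamentalDomain G s μ) (hU : MeasurableSet U)
    (hs₀ : μ s ≠ 0) (hs : μ s ≠ ∞) : ∃ x ∈ s, {g : G | g +ᵥ x ∈ U}.encard * μ s ≤ μ U := by
  obtain ⟨x, hxs, hx⟩ :=
    exists_le_setLAverage hs₀ hs (measurable_encard_vadd_mem (G := G) hU).aemeasurable
  refine ⟨x, hxs, ?_⟩
  rwa [setLAverage_eq, ← h.measure_eq_setLIntegral_encard hU, ENNReal.le_div_iff_mul_le
    (Or.inl hs₀) (Or.inl hs)] at hx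

end MeasureTheory.IsAddFundamentalDomain

section Volume

variable {ι E : Type*} [Fintype ι] [NormedAddCommGroup E] [NormedSpace ℝ E] [MeasurableSpace E]
  [BorelSpace E] (μ : Measure E) [μ.IsAddHaarMeasure] {b : Module.Basis ι ℝ E}

theorem IsLatticePacking.measure_le_two_pow_mul {B C : Set E} (hpack : IsLatticePacking b B)
    (hB : Convex ℝ B) (hCB : C ⊆ B) (hC : C.Nonempty) {V : Finset E} {k : ℕ}
    (hk : ∀ S ⊆ V, (S : Set E).PairwiseDisjoint (· +ᵥ C) → S.card ≤ k)
    {U : Set E} (hU : MeasurableSet U) (hUC : U ⊆ ⋃ v ∈ V, v +ᵥ C) :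
    μ U ≤ 2 ^ Module.finrank ℝ E * k * μ (ZSpan.fundamentalDomain b) := by
  have := b.finiteDimensional_of_finite
  have hfiber := (ZSpan.isAddFundamentalDomain' b μ).measure_le_mul_of_encard_le_s8
    (hU.const_smul₀ (2⁻¹ : ℝ)) (encard_vadd_mem_inv_two_smul_le hB hCB hC
      (fun g hg hg₀ => hpack.notMem_sub hg hg₀) hk hUC)
  calc μ U = μ ((2 : ℝ) • (2⁻¹ : ℝ) • U) := by rw [smul_inv_smul₀ two_ne_zero]
    _ = 2 ^ Module.finrank ℝ E * μ ((2⁻¹ : ℝ) • U) := by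
      rw [Measure.addHaar_smul]
      simp
    _ ≤ 2 ^ Module.finrank ℝ E * k * μ (ZSpan.fundamentalDomain b) := by
      rw [mul_assoc]
      gcongr
      exact_mod_cast hfiber

theorem IsLatticeCovering.exists_finset_card_mul_le {A : Set E} (hcover : IsLatticeCovering b A)
    (V : Finset E) {U : Set E} (hU : MeasurableSet U) (hU_top : μ U ≠ ∞)
    (hVU : ∀ v ∈ V, v +ᵥ A ⊆ U) :
    ∃ P : Finset E, (∀ v ∈ V, ∃ x ∈ P, x ∈ v +ᵥ A) ∧
      P.card * μ (ZSpan.fundamentalDomain b) ≤ μ U := by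
  have := b.finiteDimensional_of_finite
  have hF₀ := ZSpan.measure_fundamentalDomain_ne_zero b (μ := μ)
  obtain ⟨t, -, ht⟩ := (ZSpan.isAddFundamentalDomain' b μ).exists_encard_mul_le_measure hU hF₀
    (ZSpan.fundamentalDomain_isBounded b).measure_lt_top.ne
  set P := (· +ᵥ t) '' {g : (Submodule.span ℤ (Set.range b)).toAddSubgroup | g +ᵥ t ∈ U}
  have hP : (P.encard : ℝ≥0∞) * μ (ZSpan.fundamentalDomain b) ≤ μ U := by
    have hinj : Function.Injective fun g : (Submodule.span ℤ (Set.range b)).toAddSubgroup =>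
      g +ᵥ t := fun g g' h => Subtype.ext (add_right_cancel h)
    rwa [hinj.injOn.encard_image]
  have hPfin : P.Finite := by
    refine Set.encard_ne_top_iff.1 fun htop => hU_top ?_
    rwa [htop, ENat.toENNReal_top, ENNReal.top_mul hF₀, top_le_iff] at hP
  refine ⟨hPfin.toFinset, fun v hv => ?_, ?_⟩
  · obtain ⟨g, hg, hgv⟩ := hcover.exists_mem_span_add_mem_vadd t v
    exact ⟨g + t, hPfin.mem_toFinset.2 ⟨⟨g, hg⟩, hVU v hv hgv, rfl⟩, hgv⟩
  · rwa [hPfin.encard_eq_coe_toFinset_card, ENat.toENNReal_coe] at hP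

end Volume

theorem ENNReal.natCast_le_toReal_div_of_mul_le {n : ℕ} {a y : ℝ≥0∞} (h : n * a ≤ y)
    (ha₀ : a ≠ 0) (ha : a ≠ ∞) (hy : y ≠ ∞) : (n : ℝ) ≤ y.toReal / a.toReal := by
  rw [le_div_iff₀ (ENNReal.toReal_pos ha₀ ha)]
  simpa [ENNReal.toReal_mul] using ENNReal.toReal_mono hy h

theorem piercing_translates_sandwich_lemma_general
    (d : ℕ)
    (C A B : Set (EuclideanSpace ℝ (Fin d)))
    (hCint : (interior C).Nonempty)
    (hAcompact : IsCompact A)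
    (hBconv : Convex ℝ B)
    (hAC : A ⊆ C) (hCB : C ⊆ B)
    (bA bB : Module.Basis (Fin d) ℝ (EuclideanSpace ℝ (Fin d)))
    (hcover : ∀ x : EuclideanSpace ℝ (Fin d),
      ∃ c : Fin d → ℤ, x ∈ (∑ i, (c i : ℝ) • bA i) +ᵥ A)
    (hpack : ∀ c c' : Fin d → ℤ, c ≠ c' →
      Disjoint ((∑ i, (c i : ℝ) • bB i) +ᵥ B) ((∑ i, (c' i : ℝ) • bB i) +ᵥ B))
    (V : Finset (EuclideanSpace ℝ (Fin d))) :
    ∃ P W : Finset (EuclideanSpace ℝ (Fin d)),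
      W ⊆ V ∧
      (∀ v ∈ V, ∃ x ∈ P, x ∈ v +ᵥ C) ∧
      ((W : Set (EuclideanSpace ℝ (Fin d))).Pairwise fun u w =>
        Disjoint (u +ᵥ C) (w +ᵥ C)) ∧
      (P.card : ℝ) ≤ 2 ^ d *
        ((volume {x : EuclideanSpace ℝ (Fin d) | ∃ t : Fin d → ℝ,
            (∀ i, t i ∈ Set.Icc (0 : ℝ) 1) ∧ x = ∑ i, t i • bB i}).toReal /
         (volume {x : EuclideanSpace ℝ (Fin d) | ∃ t : Fin d → ℝ,
            (∀ i, t i ∈ Set.Icc (0 : ℝ) 1) ∧ x = ∑ i, t i • bA i}).toReal) *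
        (W.card : ℝ) := by
  obtain ⟨W, hWV, hWdisj, hWmax⟩ := V.exists_subset_pairwiseDisjoint_forall_card_le (· +ᵥ C)
  have hU : MeasurableSet (⋃ v ∈ V, v +ᵥ A) := .biUnion V.countable_toSet fun v _ =>
    hAcompact.isClosed.measurableSet.const_vadd v
  have hvolU := IsLatticePacking.measure_le_two_pow_mul volume hpack hBconv hCB
    (hCint.mono interior_subset) hWmax hU (Set.iUnion₂_mono fun v _ => Set.vadd_set_mono hAC)
  have hFB_top := (ZSpan.fundamentalDomain_isBounded bB).measure_lt_top (μ := volume)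
  obtain ⟨P, hPV, hP⟩ := IsLatticeCovering.exists_finset_card_mul_le volume hcover V hU
    (hvolU.trans_lt (by finiteness)).ne fun v hv => Set.subset_iUnion₂_of_subset v hv subset_rfl
  refine ⟨P, W, hWV, fun v hv => (hPV v hv).imp fun x hx => ⟨hx.1, Set.vadd_set_mono hAC hx.2⟩,
    hWdisj, ?_⟩
  rw [setOf_sum_smul_mem_Icc_eq_parallelepiped, setOf_sum_smul_mem_Icc_eq_parallelepiped,
    ← measure_congr (ZSpan.fundamentalDomain_ae_parallelepiped bA volume),
    ← measure_congr (ZSpan.fundamentalDomain_ae_parallelepiped bB volume)]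
  refine (ENNReal.natCast_le_toReal_div_of_mul_le (hP.trans hvolU)
    (ZSpan.measure_fundamentalDomain_ne_zero bA)
    (ZSpan.fundamentalDomain_isBounded bA).measure_lt_top.ne (by finiteness)).trans_eq ?_
  simp only [ENNReal.toReal_mul, ENNReal.toReal_pow, ENNReal.toReal_natCast,
    ENNReal.toReal_ofNat, finrank_euclideanSpace_fin]
  ring

/-- "Sandwich" lemma: let `C` be a convex body in `ℝ^d` and let `A ⊆ C ⊆ B` be centrally
symmetric convex bodies. If the lattice generated by the basis `bA` gives a covering of
`ℝ^d` by translates of `A`, and the lattice generated by the basis `bB` gives a packing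
by translates of `B`, then for every finite family of translates of `C`,
`τ(F) ≤ 2^d · (covol(Λ_B)/covol(Λ_A)) · ν(F)`. -/
theorem piercing_translates_sandwich_lemma
    (d : ℕ)
    (C A B : Set (EuclideanSpace ℝ (Fin d)))
    (hCcompact : IsCompact C) (hCconv : Convex ℝ C) (hCint : (interior C).Nonempty)
    (hAcompact : IsCompact A) (hAconv : Convex ℝ A) (hAint : (interior A).Nonempty)
    (hAsymm : A = -A)
    (hBcompact : IsCompact B) (hBconv : Convex ℝ B) (hBint : (interior B).Nonempty)
    (hBsymm : B = -B)
    (hAC : A ⊆ C) (hCB : C ⊆ B)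
    (bA bB : Module.Basis (Fin d) ℝ (EuclideanSpace ℝ (Fin d)))
    (hcover : ∀ x : EuclideanSpace ℝ (Fin d),
      ∃ c : Fin d → ℤ, x ∈ (∑ i, (c i : ℝ) • bA i) +ᵥ A)
    (hpack : ∀ c c' : Fin d → ℤ, c ≠ c' →
      Disjoint ((∑ i, (c i : ℝ) • bB i) +ᵥ B) ((∑ i, (c' i : ℝ) • bB i) +ᵥ B))
    (V : Finset (EuclideanSpace ℝ (Fin d))) :
    ∃ P W : Finset (EuclideanSpace ℝ (Fin d)),
      W ⊆ V ∧
      (∀ v ∈ V, ∃ x ∈ P, x ∈ v +ᵥ C) ∧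
      ((W : Set (EuclideanSpace ℝ (Fin d))).Pairwise fun u w =>
        Disjoint (u +ᵥ C) (w +ᵥ C)) ∧
      (P.card : ℝ) ≤ 2 ^ d *
        ((volume {x : EuclideanSpace ℝ (Fin d) | ∃ t : Fin d → ℝ,
            (∀ i, t i ∈ Set.Icc (0 : ℝ) 1) ∧ x = ∑ i, t i • bB i}).toReal /
         (volume {x : EuclideanSpace ℝ (Fin d) | ∃ t : Fin d → ℝ,
            (∀ i, t i ∈ Set.Icc (0 : ℝ) 1) ∧ x = ∑ i, t i • bA i}).toReal) *
        (W.card : ℝ) :=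
  piercing_translates_sandwich_lemma_general d C A B hCint hAcompact hBconv hAC hCB bA bB hcover
    hpack V
end

section
/- Let C be a convex body in ℝ^d, let u ∈ ℝ^d be a nonzero vector, and let L = {x ∈ ℝ^d : ⟨x, u⟩ ≥ 0} be the closed half-space bounded by the hyperplane through the origin (the center of C − C) with normal u. If k is a positive integer such that (C − C) ∩ L can be covered by k translates of C, then for every finite family F of translates of C, τ(F) ≤ k · ν(F). -/
open Pointwise

/-!
Greedy argument: take the translate `v +ᵥ C` of the family that is highest in the direction `u`
and put it into the packing. Every translate `w +ᵥ C` meeting it satisfies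
`v - w ∈ (C - C) ∩ L`, so `v - w` lies in some `t i +ᵥ C`, i.e. `v - t i ∈ w +ᵥ C`; the `k`
points `v - t i` therefore pierce all of these. Discard them and recurse on the translates
disjoint from `v +ᵥ C`.
-/

namespace Set

variable {G : Type*} [AddCommGroup G] {C : Set G} {a v w : G}

theorem sub_mem_sub_of_not_disjoint_vadd_set (h : ¬ Disjoint (w +ᵥ C) (v +ᵥ C)) :
    v - w ∈ C - C := by
  obtain ⟨x, ⟨c₁, hc₁, rfl⟩, ⟨c₂, hc₂, hx⟩⟩ := not_disjoint_iff.1 h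
  refine ⟨c₁, hc₁, c₂, hc₂, ?_⟩
  simp only [vadd_eq_add] at hx
  rw [sub_eq_sub_iff_add_eq_add, add_comm, ← hx, add_comm]

theorem sub_mem_vadd_set_of_sub_mem_vadd_set (h : v - w ∈ a +ᵥ C) : v - a ∈ w +ᵥ C := by
  rw [mem_vadd_set_iff_neg_vadd_mem] at h ⊢
  convert h using 1
  simp only [vadd_eq_add]
  abel

end Set

section Piercing

variable {G α ι : Type*} [AddCommGroup G] [AddCommGroup α] [LinearOrder α]
  [IsOrderedAddMonoid α] {C : Set G} {φ : G →+ α} {t : ι → G}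

theorem exists_sub_mem_vadd_set_of_not_disjoint
    (hcov : (C - C) ∩ {x | 0 ≤ φ x} ⊆ ⋃ i, t i +ᵥ C) {v w : G} (hφ : φ w ≤ φ v)
    (h : ¬ Disjoint (w +ᵥ C) (v +ᵥ C)) : ∃ i, v - t i ∈ w +ᵥ C := by
  have hmem : v - w ∈ (C - C) ∩ {x | 0 ≤ φ x} :=
    ⟨Set.sub_mem_sub_of_not_disjoint_vadd_set h, by simpa [map_sub] using hφ⟩
  obtain ⟨i, hi⟩ := Set.mem_iUnion.1 (hcov hmem)
  exact ⟨i, Set.sub_mem_vadd_set_of_sub_mem_vadd_set hi⟩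

theorem exists_piercing_card_le_mul_card_packing [Fintype ι] (hC : C.Nonempty)
    (hcov : (C - C) ∩ {x | 0 ≤ φ x} ⊆ ⋃ i, t i +ᵥ C) (V : Finset G) :
    ∃ P W : Finset G, W ⊆ V ∧ (∀ v ∈ V, ∃ x ∈ P, x ∈ v +ᵥ C) ∧
      (W : Set G).Pairwise (fun a b => Disjoint (a +ᵥ C) (b +ᵥ C)) ∧
      P.card ≤ Fintype.card ι * W.card := by
  classical
  induction V using Finset.strongInduction with
  | _ V ih =>
  rcases V.eq_empty_or_nonempty with rfl | hV
  · exact ⟨∅, ∅, by simp⟩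
  obtain ⟨v, hvV, hvmax⟩ := V.exists_max_image φ hV
  set V' := V.filter (fun w => Disjoint (w +ᵥ C) (v +ᵥ C))
  have hvV' : v ∉ V' := fun h =>
    (hC.vadd_set (a := v)).ne_empty (disjoint_self.1 (Finset.mem_filter.1 h).2)
  obtain ⟨P', W', hW'V', hP', hW', hcard⟩ :=
    ih V' ⟨Finset.filter_subset _ _, fun h => hvV' (h hvV)⟩
  refine ⟨P' ∪ Finset.univ.image (fun i => v - t i), insert v W',
    Finset.insert_subset hvV (hW'V'.trans (Finset.filter_subset _ _)), ?_, ?_, ?_⟩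
  · intro w hw
    by_cases hwV' : w ∈ V'
    · obtain ⟨x, hxP, hxw⟩ := hP' w hwV'
      exact ⟨x, Finset.mem_union_left _ hxP, hxw⟩
    · have hmeet : ¬ Disjoint (w +ᵥ C) (v +ᵥ C) := fun h => hwV' (Finset.mem_filter.2 ⟨hw, h⟩)
      obtain ⟨i, hi⟩ := exists_sub_mem_vadd_set_of_not_disjoint hcov (hvmax w hw) hmeet
      exact ⟨v - t i, Finset.mem_union_right _ (Finset.mem_image_of_mem _ (Finset.mem_univ i)), hi⟩
  · rw [Finset.coe_insert, Set.pairwise_insert]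
    refine ⟨hW', fun b hb _ => ?_⟩
    have hbv := (Finset.mem_filter.1 (hW'V' hb)).2
    exact ⟨hbv.symm, hbv⟩
  · calc (P' ∪ Finset.univ.image (fun i => v - t i)).card
        ≤ P'.card + Fintype.card ι := (Finset.card_union_le _ _).trans
          (Nat.add_le_add_left Finset.card_image_le _)
      _ ≤ Fintype.card ι * W'.card + Fintype.card ι := Nat.add_le_add_right hcard _
      _ = Fintype.card ι * (insert v W').card := by
          rw [Finset.card_insert_of_notMem fun h => hvV' (hW'V' h)]; ring

end Piercing

theorem piercing_translates_halfspace_covering_bound_general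
    (d : ℕ)
    (C : Set (EuclideanSpace ℝ (Fin d)))
    (hCint : (interior C).Nonempty)
    (u : EuclideanSpace ℝ (Fin d))
    (k : ℕ)
    (hcov : ∃ v : Fin k → EuclideanSpace ℝ (Fin d),
      (C - C) ∩ {x : EuclideanSpace ℝ (Fin d) | (0 : ℝ) ≤ inner ℝ x u} ⊆
        ⋃ i, v i +ᵥ C)
    (V : Finset (EuclideanSpace ℝ (Fin d))) :
    ∃ P W : Finset (EuclideanSpace ℝ (Fin d)),
      W ⊆ V ∧
      (∀ v ∈ V, ∃ x ∈ P, x ∈ v +ᵥ C) ∧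
      ((W : Set (EuclideanSpace ℝ (Fin d))).Pairwise fun a b =>
        Disjoint (a +ᵥ C) (b +ᵥ C)) ∧
      P.card ≤ k * W.card := by
  obtain ⟨t, ht⟩ := hcov
  let φ : EuclideanSpace ℝ (Fin d) →+ ℝ :=
    AddMonoidHom.mk' (fun x => inner ℝ x u) fun x y => inner_add_left x y u
  simpa [Fintype.card_fin] using
    exists_piercing_card_le_mul_card_packing (φ := φ) (hCint.mono interior_subset) ht V

/-- Let `C` be a convex body in `ℝ^d`, let `u ≠ 0`, and let
`L = {x : ⟨x,u⟩ ≥ 0}` be a closed half-space through the center of `C − C`.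
If `(C − C) ∩ L` can be covered by `k` translates of `C`, then for every finite family of
translates of `C`, `τ(F) ≤ k · ν(F)`. -/
theorem piercing_translates_halfspace_covering_bound
    (d : ℕ)
    (C : Set (EuclideanSpace ℝ (Fin d)))
    (hCcompact : IsCompact C) (hCconv : Convex ℝ C) (hCint : (interior C).Nonempty)
    (u : EuclideanSpace ℝ (Fin d)) (hu : u ≠ 0)
    (k : ℕ) (hk : 0 < k)
    (hcov : ∃ v : Fin k → EuclideanSpace ℝ (Fin d),
      (C - C) ∩ {x : EuclideanSpace ℝ (Fin d) | (0 : ℝ) ≤ inner ℝ x u} ⊆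
        ⋃ i, v i +ᵥ C)
    (V : Finset (EuclideanSpace ℝ (Fin d))) :
    ∃ P W : Finset (EuclideanSpace ℝ (Fin d)),
      W ⊆ V ∧
      (∀ v ∈ V, ∃ x ∈ P, x ∈ v +ᵥ C) ∧
      ((W : Set (EuclideanSpace ℝ (Fin d))).Pairwise fun a b =>
        Disjoint (a +ᵥ C) (b +ᵥ C)) ∧
      P.card ≤ k * W.card :=
  piercing_translates_halfspace_covering_bound_general d C hCint u k hcov V
end

section
/- Let T be a triangle in the plane, i.e., T = conv{a, b, c} for three affinely independent points a, b, c ∈ ℝ². For every nonempty finite family F of translates of T, τ(F) ≤ 5 · ν(F) − 2. -/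
/-!
An affine equivalence maps translates to translates and preserves disjointness, so `T` may be
taken to be the standard triangle `{p | 0 ≤ p.1, 0 ≤ p.2, p.1 + p.2 ≤ 1}` in `ℝ × ℝ`. Let `v` be
the member of the family of least height `v.1 + v.2`. Every translate meeting `v + T` lies above
it and is pierced by one of five points attached to `v`; the translates disjoint from `v + T`
are handled by induction, with `v` added to the packing. If every translate meets `v + T`, either
two of them are disjoint (a packing of size two against five points), or the family is pairwise
intersecting and three points pierce it.
-/

open Pointwise Finset

section Piercing

variable {E : Type*}

def PiercingBound [Add E] (S : Set E) : Prop :=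
  ∀ V : Finset E, V.Nonempty → ∃ P W : Finset E, W ⊆ V ∧ (∀ v ∈ V, ∃ x ∈ P, x ∈ v +ᵥ S) ∧
    ((W : Set E).Pairwise fun u w => Disjoint (u +ᵥ S) (w +ᵥ S)) ∧ P.card + 2 ≤ 5 * W.card

theorem piercingBound_of_neighbours_of_cliques [AddGroup E] {S : Set E} (hS : S.Nonempty)
    (hnbhd : ∀ V : Finset E, V.Nonempty → ∃ v ∈ V, ∃ Q : Finset E, Q.card ≤ 5 ∧
      ∀ w ∈ V, ¬Disjoint (v +ᵥ S) (w +ᵥ S) → ∃ x ∈ Q, x ∈ w +ᵥ S)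
    (hclique : ∀ V : Finset E, V.Nonempty → (∀ u ∈ V, ∀ w ∈ V, ¬Disjoint (u +ᵥ S) (w +ᵥ S)) →
      ∃ Q : Finset E, Q.card ≤ 3 ∧ ∀ w ∈ V, ∃ x ∈ Q, x ∈ w +ᵥ S) :
    PiercingBound S := by
  classical
  have hself (u : E) : ¬Disjoint (u +ᵥ S) (u +ᵥ S) := by
    simpa [disjoint_self, ← Set.nonempty_iff_ne_empty] using hS
  intro V hV
  induction V using Finset.strongInduction with
  | H V ih =>
  obtain ⟨v, hv, Q, hQ, hQV⟩ := hnbhd V hV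
  set R := V.filter fun w => Disjoint (v +ᵥ S) (w +ᵥ S)
  obtain hR | hR := R.eq_empty_or_nonempty
  · have hmeet := filter_eq_empty_iff.1 hR
    by_cases hpair : ∀ u ∈ V, ∀ w ∈ V, ¬Disjoint (u +ᵥ S) (w +ᵥ S)
    · obtain ⟨Q', hQ', hQ'V⟩ := hclique V hV hpair
      exact ⟨Q', {v}, singleton_subset_iff.2 hv, hQ'V, by simp, by rw [card_singleton]; omega⟩
    push Not at hpair
    obtain ⟨u, hu, w, hw, huw⟩ := hpair
    have hne : u ≠ w := by rintro rfl; exact hself u huw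
    refine ⟨Q, {u, w}, insert_subset hu (singleton_subset_iff.2 hw),
      fun z hz => hQV z hz (hmeet hz), ?_, ?_⟩
    · rw [coe_pair]
      exact Set.pairwise_pair.2 fun _ => ⟨huw, huw.symm⟩
    · rw [card_pair hne]
      omega
  · obtain ⟨P, W, hWR, hP, hW, hcard⟩ := ih R (filter_ssubset.2 ⟨v, hv, hself v⟩) hR
    have hvW : v ∉ W := fun h => hself v (mem_filter.1 (hWR h)).2
    refine ⟨P ∪ Q, insert v W, insert_subset hv (hWR.trans (filter_subset _ _)), ?_, ?_, ?_⟩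
    · intro w hw
      by_cases hwR : w ∈ R
      · obtain ⟨x, hx, hxw⟩ := hP w hwR
        exact ⟨x, mem_union_left _ hx, hxw⟩
      · obtain ⟨x, hx, hxw⟩ := hQV w hw fun h => hwR (mem_filter.2 ⟨hw, h⟩)
        exact ⟨x, mem_union_right _ hx, hxw⟩
    · rw [coe_insert]
      refine hW.insert fun u hu _ => ?_
      have hvu := (mem_filter.1 (hWR hu)).2
      exact ⟨hvu, hvu.symm⟩
    · rw [card_insert_of_notMem hvW]
      have := card_union_le P Q
      omega

end Piercing

theorem PiercingBound.image_affineEquiv {R F E : Type*} [Ring R] [AddCommGroup F] [Module R F]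
    [AddCommGroup E] [Module R E] {S : Set F} (hS : PiercingBound S) (e : F ≃ᵃ[R] E) :
    PiercingBound (e '' S) := by
  classical
  have himage (u : F) : e '' (u +ᵥ S) = e.linear u +ᵥ e '' S := by
    simp only [← Set.image_vadd, Set.image_image, e.map_vadd]
  intro V hV
  obtain ⟨P, W, hWV, hP, hW, hcard⟩ := hS (V.image e.linear.symm) (hV.image _)
  refine ⟨P.image e, W.image e.linear, ?_, ?_, ?_, ?_⟩
  · intro w hw
    obtain ⟨w', hw', rfl⟩ := mem_image.1 hw
    obtain ⟨v, hv, rfl⟩ := mem_image.1 (hWV hw')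
    simpa using hv
  · intro v hv
    obtain ⟨x, hx, hxv⟩ := hP _ (mem_image_of_mem _ hv)
    refine ⟨e x, mem_image_of_mem _ hx, ?_⟩
    simpa [himage] using Set.mem_image_of_mem e hxv
  · rw [coe_image, e.linear.injective.injOn.pairwise_image]
    intro u hu w hw huw
    simpa [Function.onFun, ← himage, Set.disjoint_image_iff e.injective] using hW hu hw huw
  · rw [card_image_of_injective _ e.linear.injective]
    have := card_image_le (s := P) (f := e)
    omega

def stdTriangle : Set (ℝ × ℝ) := {p | 0 ≤ p.1 ∧ 0 ≤ p.2 ∧ p.1 + p.2 ≤ 1}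

theorem convex_stdTriangle : Convex ℝ stdTriangle :=
  (convex_halfSpace_ge (LinearMap.fst ℝ ℝ ℝ).isLinear 0).inter
    ((convex_halfSpace_ge (LinearMap.snd ℝ ℝ ℝ).isLinear 0).inter
      (convex_halfSpace_le (LinearMap.fst ℝ ℝ ℝ + LinearMap.snd ℝ ℝ ℝ).isLinear 1))

theorem stdTriangle_eq_convexHull : stdTriangle = convexHull ℝ {0, (1, 0), (0, 1)} := by
  refine subset_antisymm ?_ (convexHull_min ?_ convex_stdTriangle)
  · rintro ⟨x, y⟩ ⟨hx, hy, hxy⟩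
    have := (convex_convexHull ℝ ({0, (1, 0), (0, 1)} : Set (ℝ × ℝ))).sum_mem
      (t := univ) (w := ![1 - x - y, x, y]) (z := ![0, (1, 0), (0, 1)])
      (fun i _ => by fin_cases i <;> simp <;> linarith) (by simp [Fin.sum_univ_three]; ring)
      (fun i _ => subset_convexHull ℝ _ (by fin_cases i <;> simp))
    simpa [Fin.sum_univ_three] using this
  · rintro _ (rfl | rfl | rfl) <;> norm_num [stdTriangle]

theorem mem_vadd_stdTriangle {p w : ℝ × ℝ} :
    p ∈ w +ᵥ stdTriangle ↔ w.1 ≤ p.1 ∧ w.2 ≤ p.2 ∧ p.1 + p.2 ≤ w.1 + w.2 + 1 := by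
  simp only [Set.mem_vadd_set_iff_neg_vadd_mem, stdTriangle, Set.mem_ofPred_eq, vadd_eq_add,
    Prod.fst_add, Prod.snd_add, Prod.fst_neg, Prod.snd_neg]
  constructor <;> rintro ⟨h₁, h₂, h₃⟩ <;> refine ⟨?_, ?_, ?_⟩ <;> linarith

theorem le_of_not_disjoint_vadd_stdTriangle {u w : ℝ × ℝ}
    (h : ¬Disjoint (u +ᵥ stdTriangle) (w +ᵥ stdTriangle)) :
    u.1 ≤ w.1 + 1 ∧ u.2 ≤ w.2 + 1 ∧ u.1 + u.2 ≤ w.1 + w.2 + 1 := by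
  obtain ⟨p, hu, hw⟩ := Set.not_disjoint_iff.1 h
  rw [mem_vadd_stdTriangle] at hu hw
  refine ⟨?_, ?_, ?_⟩ <;> linarith

noncomputable def fivePiercers (v : ℝ × ℝ) : Finset (ℝ × ℝ) :=
  {(v.1 + 1/2, v.2 + 1/2), (v.1 + 1, v.2 + 1/2), (v.1 + 1/2, v.2 + 1), (v.1 + 1, v.2),
    (v.1, v.2 + 1)}

theorem exists_mem_fivePiercers_mem_vadd_stdTriangle {v w : ℝ × ℝ} (hvw : v.1 + v.2 ≤ w.1 + w.2)
    (h : ¬Disjoint (v +ᵥ stdTriangle) (w +ᵥ stdTriangle)) :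
    ∃ x ∈ fivePiercers v, x ∈ w +ᵥ stdTriangle := by
  obtain ⟨h₁, h₂, -⟩ := le_of_not_disjoint_vadd_stdTriangle h
  obtain ⟨h₁', h₂', h₃'⟩ := le_of_not_disjoint_vadd_stdTriangle (disjoint_comm.not.1 h)
  simp only [fivePiercers, mem_insert, mem_singleton, exists_eq_or_imp, exists_eq_left,
    mem_vadd_stdTriangle]
  by_cases hs : v.1 + v.2 + 1/2 ≤ w.1 + w.2
  · by_cases hb : w.2 ≤ v.2 + 1/2
    · refine Or.inr (Or.inl ⟨?_, ?_, ?_⟩) <;> linarith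
    · refine Or.inr (Or.inr (Or.inl ⟨?_, ?_, ?_⟩)) <;> linarith
  · by_cases hb : w.2 ≤ v.2
    · refine Or.inr (Or.inr (Or.inr (Or.inl ⟨?_, ?_, ?_⟩))) <;> linarith
    by_cases ha : w.1 ≤ v.1
    · refine Or.inr (Or.inr (Or.inr (Or.inr ⟨?_, ?_, ?_⟩))) <;> linarith
    · refine Or.inl ⟨?_, ?_, ?_⟩ <;> linarith

theorem exists_three_piercers_of_forall_not_disjoint (V : Finset (ℝ × ℝ)) (hV : V.Nonempty)
    (hV' : ∀ u ∈ V, ∀ w ∈ V, ¬Disjoint (u +ᵥ stdTriangle) (w +ᵥ stdTriangle)) :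
    ∃ Q : Finset (ℝ × ℝ), Q.card ≤ 3 ∧ ∀ w ∈ V, ∃ x ∈ Q, x ∈ w +ᵥ stdTriangle := by
  obtain ⟨α, hα, hαmax⟩ := V.exists_max_image Prod.fst hV
  obtain ⟨β, hβ, hβmax⟩ := V.exists_max_image Prod.snd hV
  obtain ⟨γ, hγ, hγmin⟩ := V.exists_min_image (fun w => w.1 + w.2) hV
  -- `(x, y)` lies on the top edge of the lowest translate, shifted so that the two fallback
  -- points `(α.1, y)` and `(x, β.2)` catch the translates too far right or too far up.
  obtain ⟨x, y, hsum, hdiff⟩ : ∃ x y : ℝ, x + y = γ.1 + γ.2 + 1 ∧ x - y = α.1 - β.2 :=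
    ⟨(α.1 - β.2 + γ.1 + γ.2 + 1) / 2, (β.2 - α.1 + γ.1 + γ.2 + 1) / 2, by ring, by ring⟩
  refine ⟨{(x, y), (α.1, y), (x, β.2)}, card_le_three, fun w hw => ?_⟩
  have hαw := (le_of_not_disjoint_vadd_stdTriangle (hV' α hα w hw)).1
  have hβw := (le_of_not_disjoint_vadd_stdTriangle (hV' β hβ w hw)).2.1
  have hwγ := (le_of_not_disjoint_vadd_stdTriangle (hV' w hw γ hγ)).2.2
  have hwα := hαmax w hw
  have hwβ := hβmax w hw
  have hγw := hγmin w hw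
  simp only [mem_insert, mem_singleton, exists_eq_or_imp, exists_eq_left, mem_vadd_stdTriangle]
  by_cases hx : w.1 ≤ x
  · by_cases hy : w.2 ≤ y
    · left; refine ⟨hx, hy, ?_⟩; linarith
    · right; right; refine ⟨hx, ?_, ?_⟩ <;> linarith
  · right; left; refine ⟨?_, ?_, ?_⟩ <;> linarith

theorem piercingBound_stdTriangle : PiercingBound stdTriangle := by
  refine piercingBound_of_neighbours_of_cliques ⟨0, by simp [stdTriangle]⟩ (fun V hV => ?_)
    exists_three_piercers_of_forall_not_disjoint
  obtain ⟨v, hv, hmin⟩ := V.exists_min_image (fun w => w.1 + w.2) hV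
  exact ⟨v, hv, fivePiercers v, card_le_five,
    fun w hw => exists_mem_fivePiercers_mem_vadd_stdTriangle (hmin w hw)⟩

theorem AffineIndependent.linearIndependent_sub {E : Type*} [AddCommGroup E] [Module ℝ E]
    {a b c : E} (h : AffineIndependent ℝ ![a, b, c]) : LinearIndependent ℝ ![b - a, c - a] := by
  rw [affineIndependent_iff_linearIndependent_vsub ℝ _ 0,
    ← linearIndependent_equiv (finSuccAboveEquiv 0)] at h
  convert! h
  ext i
  fin_cases i <;> rfl

theorem exists_affineEquiv_image_stdTriangle {E : Type*} [AddCommGroup E] [Module ℝ E]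
    (hE : Module.finrank ℝ E = 2) {a b c : E} (habc : AffineIndependent ℝ ![a, b, c]) :
    ∃ e : (ℝ × ℝ) ≃ᵃ[ℝ] E, e '' stdTriangle = convexHull ℝ {a, b, c} := by
  have : FiniteDimensional ℝ E := Module.finite_of_finrank_eq_succ hE
  let φ : ℝ × ℝ →ₗ[ℝ] E :=
    (LinearMap.toSpanSingleton ℝ E (b - a)).coprod (LinearMap.toSpanSingleton ℝ E (c - a))
  have hφ : Function.Injective φ := by
    rw [← LinearMap.ker_eq_bot, LinearMap.ker_eq_bot']
    rintro ⟨s, t⟩ h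
    obtain ⟨rfl, rfl⟩ := LinearIndependent.pair_iff.1 habc.linearIndependent_sub s t h
    rfl
  let e : (ℝ × ℝ) ≃ᵃ[ℝ] E :=
    (φ.linearEquivOfInjective hφ (by simp [hE])).toAffineEquiv.trans (AffineEquiv.constVAdd ℝ E a)
  refine ⟨e, ?_⟩
  rw [stdTriangle_eq_convexHull, ← e.coe_toAffineMap, e.toAffineMap.image_convexHull]
  simp [Set.image_insert_eq, e, φ]

/-- Let `T` be a triangle in the plane. For every nonempty finite family of translates of
`T`, `τ(F) ≤ 5 · ν(F) − 2` (stated as `τ(F) + 2 ≤ 5 · ν(F)`). -/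
theorem piercing_translates_triangle
    (a b c : EuclideanSpace ℝ (Fin 2))
    (habc : AffineIndependent ℝ ![a, b, c])
    (T : Set (EuclideanSpace ℝ (Fin 2)))
    (hT : T = convexHull ℝ {a, b, c})
    (V : Finset (EuclideanSpace ℝ (Fin 2))) (hV : V.Nonempty) :
    ∃ P W : Finset (EuclideanSpace ℝ (Fin 2)),
      W ⊆ V ∧
      (∀ v ∈ V, ∃ x ∈ P, x ∈ v +ᵥ T) ∧
      ((W : Set (EuclideanSpace ℝ (Fin 2))).Pairwise fun u w =>
        Disjoint (u +ᵥ T) (w +ᵥ T)) ∧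
      P.card + 2 ≤ 5 * W.card := by
  obtain ⟨e, he⟩ := exists_affineEquiv_image_stdTriangle finrank_euclideanSpace_fin habc
  rw [hT, ← he]
  exact piercingBound_stdTriangle.image_affineEquiv e V hV
end

section
/- Let C be a convex body in ℝ^d, and let k be a positive integer such that the difference body C − C can be covered by k translates of C. Then for every finite family F of positive homothets of C, τ(F) ≤ k · ν(F). -/
/-! Greedy argument: let `l • C + v` be a smallest member of the family. If a member
`m • C + v'` with `m ≥ l` meets it, write the common point as `v + l c = v' + m c'` and
`c' - c = w i + u` with `u ∈ C`; then `v - l • w i = v' + (m - l) c' + l u ∈ m • C + v'`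
by convexity. So the `k` points `v - l • w i` pierce every member meeting `l • C + v`;
keep this member in the packing and recurse on the members disjoint from it. -/

open Pointwise

section

variable {𝕜 E : Type*} [Field 𝕜] [LinearOrder 𝕜] [IsStrictOrderedRing 𝕜]
  [AddCommGroup E] [Module 𝕜 E]

theorem Convex.exists_translate_mem_of_meets_larger_homothet {C : Set E} (hC : Convex 𝕜 C)
    {ι : Type*} {w : ι → E} (hcov : C - C ⊆ ⋃ i, w i +ᵥ C) {l m : 𝕜} {v v' x : E}
    (hl : 0 ≤ l) (hlm : l ≤ m) (hx : x ∈ v +ᵥ l • C) (hx' : x ∈ v' +ᵥ m • C) :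
    ∃ i, v - l • w i ∈ v' +ᵥ m • C := by
  obtain ⟨_, ⟨c, hc, rfl⟩, rfl⟩ := hx
  obtain ⟨_, ⟨c', hc', rfl⟩, hxc'⟩ := hx'
  obtain ⟨i, u, hu, hcu⟩ := Set.mem_iUnion.mp (hcov (Set.sub_mem_sub hc' hc))
  refine ⟨i, (m - l) • c' + l • u, ?_, ?_⟩
  · have hsplit : m • C = (m - l) • C + l • C := by
      rw [← hC.add_smul (sub_nonneg.mpr hlm) hl, sub_add_cancel]
    rw [hsplit]
    exact Set.add_mem_add (Set.smul_mem_smul_set hc') (Set.smul_mem_smul_set hu)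
  · simp only [vadd_eq_add] at hcu hxc' ⊢
    have hwi : w i = c' - c - u := by rw [← hcu]; abel
    rw [hwi]
    linear_combination (norm := module) hxc'

theorem Convex.exists_transversal_card_le_mul_card_disjoint_subfamily {C : Set E}
    (hC : Convex 𝕜 C) (hCne : C.Nonempty) {ι : Type*} [Fintype ι] {w : ι → E}
    (hcov : C - C ⊆ ⋃ i, w i +ᵥ C) (S : Finset (𝕜 × E)) (hS : ∀ s ∈ S, 0 ≤ s.1) :
    ∃ (P : Finset E) (W : Finset (𝕜 × E)), W ⊆ S ∧
      (∀ s ∈ S, ∃ x ∈ P, x ∈ s.2 +ᵥ s.1 • C) ∧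
      (W : Set (𝕜 × E)).Pairwise (fun s s' => Disjoint (s.2 +ᵥ s.1 • C) (s'.2 +ᵥ s'.1 • C)) ∧
      P.card ≤ Fintype.card ι * W.card := by
  classical
  induction S using Finset.strongInduction with | H S ih => ?_
  rcases S.eq_empty_or_nonempty with rfl | hSne
  · exact ⟨∅, ∅, subset_rfl, by simp, by simp, by simp⟩
  obtain ⟨s, hs, hmin⟩ := S.exists_min_image Prod.fst hSne
  set T := S.filter fun t => Disjoint (t.2 +ᵥ t.1 • C) (s.2 +ᵥ s.1 • C)
  have hsT : s ∉ T := fun h =>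
    (hCne.smul_set.vadd_set).ne_empty (disjoint_self.mp (Finset.mem_filter.mp h).2)
  obtain ⟨P, W, hWT, hP, hW, hcard⟩ :=
    ih T ⟨Finset.filter_subset _ _, fun h => hsT (h hs)⟩
      fun t ht => hS t (Finset.filter_subset _ _ ht)
  refine ⟨P ∪ Finset.univ.image (fun i => s.2 - s.1 • w i), insert s W,
    Finset.insert_subset hs (hWT.trans (Finset.filter_subset _ _)), fun t ht => ?_, ?_, ?_⟩
  · by_cases htT : t ∈ T
    · obtain ⟨x, hxP, hxt⟩ := hP t htT
      exact ⟨x, Finset.mem_union_left _ hxP, hxt⟩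
    · obtain ⟨x, hxt, hxs⟩ :=
        Set.not_disjoint_iff.mp fun h => htT (Finset.mem_filter.mpr ⟨ht, h⟩)
      obtain ⟨i, hi⟩ :=
        hC.exists_translate_mem_of_meets_larger_homothet hcov (hS s hs) (hmin t ht) hxs hxt
      exact ⟨_, Finset.mem_union_right _ (Finset.mem_image_of_mem _ (Finset.mem_univ i)), hi⟩
  · rw [Finset.coe_insert]
    refine hW.insert fun t ht _ => ?_
    have hts := (Finset.mem_filter.mp (hWT ht)).2
    exact ⟨hts.symm, hts⟩
  · calc (P ∪ Finset.univ.image (fun i => s.2 - s.1 • w i)).card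
        ≤ P.card + Fintype.card ι :=
          (Finset.card_union_le _ _).trans (Nat.add_le_add_left Finset.card_image_le _)
      _ ≤ Fintype.card ι * (insert s W).card := by
          rw [Finset.card_insert_of_notMem fun h => hsT (hWT h)]
          linarith
end

theorem piercing_homothets_difference_body_bound_general
    (d : ℕ)
    (C : Set (EuclideanSpace ℝ (Fin d)))
    (hCconv : Convex ℝ C) (hCint : (interior C).Nonempty)
    (k : ℕ)
    (hcov : ∃ v : Fin k → EuclideanSpace ℝ (Fin d), C - C ⊆ ⋃ i, v i +ᵥ C)
    (S : Finset (ℝ × EuclideanSpace ℝ (Fin d)))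
    (hS : ∀ s ∈ S, 0 < s.1) :
    ∃ (P : Finset (EuclideanSpace ℝ (Fin d))) (W : Finset (ℝ × EuclideanSpace ℝ (Fin d))),
      W ⊆ S ∧
      (∀ s ∈ S, ∃ x ∈ P, x ∈ s.2 +ᵥ s.1 • C) ∧
      ((W : Set (ℝ × EuclideanSpace ℝ (Fin d))).Pairwise fun s s' =>
        Disjoint (s.2 +ᵥ s.1 • C) (s'.2 +ᵥ s'.1 • C)) ∧
      P.card ≤ k * W.card := by
  obtain ⟨v, hcov⟩ := hcov
  simpa using hCconv.exists_transversal_card_le_mul_card_disjoint_subfamily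
    (hCint.mono interior_subset) hcov S fun s hs => (hS s hs).le

/-- Let `C` be a convex body in `ℝ^d` whose difference body `C − C` can be covered by `k`
translates of `C`. Then for every finite family of positive homothets of `C` (indexed by
pairs `(λ, v)` with `λ > 0`, the homothet being `λ • C + v`), `τ(F) ≤ k · ν(F)`. -/
theorem piercing_homothets_difference_body_bound
    (d : ℕ)
    (C : Set (EuclideanSpace ℝ (Fin d)))
    (hCcompact : IsCompact C) (hCconv : Convex ℝ C) (hCint : (interior C).Nonempty)
    (k : ℕ) (hk : 0 < k)
    (hcov : ∃ v : Fin k → EuclideanSpace ℝ (Fin d), C - C ⊆ ⋃ i, v i +ᵥ C)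
    (S : Finset (ℝ × EuclideanSpace ℝ (Fin d)))
    (hS : ∀ s ∈ S, 0 < s.1) :
    ∃ (P : Finset (EuclideanSpace ℝ (Fin d))) (W : Finset (ℝ × EuclideanSpace ℝ (Fin d))),
      W ⊆ S ∧
      (∀ s ∈ S, ∃ x ∈ P, x ∈ s.2 +ᵥ s.1 • C) ∧
      ((W : Set (ℝ × EuclideanSpace ℝ (Fin d))).Pairwise fun s s' =>
        Disjoint (s.2 +ᵥ s.1 • C) (s'.2 +ᵥ s'.1 • C)) ∧
      P.card ≤ k * W.card :=
  piercing_homothets_difference_body_bound_general d C hCconv hCint k hcov S hS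
end

section
/- For every centrally symmetric convex body C in the plane ℝ² (C = −C) and every finite family F of positive homothets of C, τ(F) ≤ 7 · ν(F). -/
/-!
Let `N` be the gauge of `C`. An intermediate value argument on the unit circle gives `u`, `w` with
`N u = N w = N (w - u) = 1`, i.e. an affinely regular hexagon `±u, ±w, ±(w - u)` inscribed in `C`.
Cutting `2C` along the six sectors between consecutive vertices shows that `2C` is covered by `C`
and its six translates by the sums of consecutive vertices. Consequently a homothet `λC + v` with
`λ ≥ μ` that meets `μC + v₀` contains one of seven points `v₀ + μp`, so greedily taking a member of
least scale, piercing everything meeting it with seven points and recursing gives `τ ≤ 7ν`.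
-/

open Pointwise Set

namespace Seminorm

variable {E : Type*} [AddCommGroup E] [Module ℝ E] (N : Seminorm ℝ E)

theorem apply_smul_add_smul_le (r s : ℝ) (x y : E) :
    N (r • x + s • y) ≤ |r| * N x + |s| * N y := by
  simpa only [map_smul_eq_mul, Real.norm_eq_abs] using map_add_le_add N (r • x) (s • y)

-- In the coordinates `p, q`, the hypotheses describe the hexagon `±a, ±b, ±(b - a)`.
theorem apply_smul_add_smul_le_one {a b : E} (ha : N a ≤ 1) (hb : N b ≤ 1) (hba : N (b - a) ≤ 1)
    {p q : ℝ} (hp : |p| ≤ 1) (hq : |q| ≤ 1) (hpq : |p + q| ≤ 1) : N (p • a + q • b) ≤ 1 := by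
  have bound : ∀ (r s : ℝ) (x y : E), N x ≤ 1 → N y ≤ 1 → N (r • x + s • y) ≤ |r| + |s| :=
    fun r s x y hx hy => (N.apply_smul_add_smul_le r s x y).trans <|
      add_le_add (mul_le_of_le_one_right (abs_nonneg r) hx)
        (mul_le_of_le_one_right (abs_nonneg s) hy)
  have h₁ := bound p q a b ha hb
  have h₂ : N (p • a + q • b) ≤ |p + q| + |q| := by
    simpa only [show (p + q) • a + q • (b - a) = p • a + q • b by module]
      using bound (p + q) q a (b - a) ha hba
  have h₃ : N (p • a + q • b) ≤ |p + q| + |p| := by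
    simpa only [show (p + q) • b + (-p) • (b - a) = p • a + q • b by module, abs_neg]
      using bound (p + q) (-p) b (b - a) hb hba
  rcases abs_cases p with ⟨hp', _⟩ | ⟨hp', _⟩ <;> rcases abs_cases q with ⟨hq', _⟩ | ⟨hq', _⟩ <;>
    rcases abs_cases (p + q) with ⟨hpq', _⟩ | ⟨hpq', _⟩ <;> linarith

theorem coeff_le_one_of_apply_le_one {a b : E} (ha : N a = 1) (hba : N (b - a) ≤ 1) {α β : ℝ}
    (hα : 0 ≤ α) (hβ : 0 ≤ β) (hy : N (α • a + β • b) ≤ 1) : α ≤ 1 := by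
  have : α + β ≤ 1 + β := calc
    α + β = |α + β| * N a := by rw [ha, mul_one, abs_of_nonneg (by positivity)]
    _ = N ((1 : ℝ) • (α • a + β • b) + β • (a - b)) := by
      rw [← Real.norm_eq_abs, ← map_smul_eq_mul]; congr 1; module
    _ ≤ |1| * N (α • a + β • b) + |β| * N (a - b) := N.apply_smul_add_smul_le _ _ _ _
    _ ≤ 1 + β := by
      rw [abs_one, one_mul, abs_of_nonneg hβ, map_sub_rev]
      nlinarith
  linarith

theorem two_smul_le_one_or_two_smul_sub_add_le_one {a b : E} (ha : N a = 1) (hb : N b = 1)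
    (hba : N (b - a) ≤ 1) {α β : ℝ} (hα : 0 ≤ α) (hβ : 0 ≤ β) (hy : N (α • a + β • b) ≤ 1) :
    N ((2 : ℝ) • (α • a + β • b)) ≤ 1 ∨ N ((2 : ℝ) • (α • a + β • b) - (a + b)) ≤ 1 := by
  have hα₁ : α ≤ 1 := N.coeff_le_one_of_apply_le_one ha hba hα hβ hy
  have hβ₁ : β ≤ 1 := by
    rw [add_comm] at hy
    exact N.coeff_le_one_of_apply_le_one hb (by rwa [map_sub_rev]) hβ hα hy
  rcases le_total (α + β) (1 / 2) with hsmall | hlarge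
  · left
    calc N ((2 : ℝ) • (α • a + β • b)) = N ((2 * α) • a + (2 * β) • b) := by congr 1; module
      _ ≤ |2 * α| * N a + |2 * β| * N b := N.apply_smul_add_smul_le _ _ _ _
      _ ≤ 1 := by
        rw [ha, hb, abs_of_nonneg (by positivity), abs_of_nonneg (by positivity)]
        linarith
  right
  rcases le_total (α + β) (3 / 2) with hmid | hlarge'
  · rw [show (2 : ℝ) • (α • a + β • b) - (a + b) = (2 * α - 1) • a + (2 * β - 1) • b by module]
    exact N.apply_smul_add_smul_le_one ha.le hb.le hba (abs_le.2 ⟨by linarith, by linarith⟩)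
      (abs_le.2 ⟨by linarith, by linarith⟩) (abs_le.2 ⟨by linarith, by linarith⟩)
  · -- `2y - (a + b)` is a convex combination of `y`, `a`, `b`, with weights proportional to
    -- `2(α + β) - 3`, `1 - β`, `1 - α`
    have hd₀ : 0 < α + β - 1 := by linarith
    have key : (α + β - 1) * N ((2 : ℝ) • (α • a + β • b) - (a + b)) ≤ α + β - 1 := calc
      (α + β - 1) * N ((2 : ℝ) • (α • a + β • b) - (a + b))
          = N ((α + β - 1) • ((2 : ℝ) • (α • a + β • b) - (a + b))) := by
        rw [map_smul_eq_mul, Real.norm_of_nonneg hd₀.le]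
      _ = N ((2 * (α + β - 1) - 1) • (α • a + β • b) + ((1 - β) • a + (1 - α) • b)) := by
        congr 1; module
      _ ≤ (2 * (α + β - 1) - 1) * N (α • a + β • b) + ((1 - β) * N a + (1 - α) * N b) := by
        refine (map_add_le_add _ _ _).trans (add_le_add ?_ ?_)
        · rw [map_smul_eq_mul, Real.norm_of_nonneg (by linarith)]
        · simpa only [abs_of_nonneg (sub_nonneg.2 hα₁), abs_of_nonneg (sub_nonneg.2 hβ₁)]
            using N.apply_smul_add_smul_le (1 - β) (1 - α) a b
      _ ≤ α + β - 1 := by rw [ha, hb]; nlinarith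
    exact le_of_mul_le_mul_left (by linarith) hd₀

theorem exists_card_le_seven_two_smul_sub_le_one {u w : E} (hu : N u = 1) (hw : N w = 1)
    (hwu : N (w - u) = 1) (hspan : Submodule.span ℝ {u, w} = ⊤) :
    ∃ P : Finset E, P.card ≤ 7 ∧ ∀ z, N z ≤ 1 → ∃ p ∈ P, N ((2 : ℝ) • z - p) ≤ 1 := by
  classical
  set L : List E :=
    [0, u + w, w + (w - u), (w - u) + -u, -(u + w), -(w + (w - u)), -((w - u) + -u)]
  have hneg : ∀ p ∈ L, -p ∈ L := by
    intro p hp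
    simp only [L, List.mem_cons, List.not_mem_nil, or_false] at hp
    rcases hp with rfl | rfl | rfl | rfl | rfl | rfl | rfl <;> simp [L]
  refine ⟨L.toFinset, List.toFinset_card_le L, fun z hz => ?_⟩
  simp only [List.mem_toFinset]
  have sector : ∀ a b, N a = 1 → N b = 1 → N (b - a) = 1 → a + b ∈ L → ∀ α β : ℝ, 0 ≤ α →
      0 ≤ β → N (α • a + β • b) ≤ 1 → ∃ p ∈ L, N ((2 : ℝ) • (α • a + β • b) - p) ≤ 1 := by
    intro a b ha hb hba hab α β hα hβ hy
    rcases N.two_smul_le_one_or_two_smul_sub_add_le_one ha hb hba.le hα hβ hy with h | h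
    · exact ⟨0, by simp [L], by rwa [sub_zero]⟩
    · exact ⟨a + b, hab, h⟩
  -- the three sectors between consecutive vertices `u`, `w`, `w - u`, `-u` of the hexagon
  have upper : ∀ c₁ c₂ : ℝ, 0 ≤ c₂ → N (c₁ • u + c₂ • w) ≤ 1 →
      ∃ p ∈ L, N ((2 : ℝ) • (c₁ • u + c₂ • w) - p) ≤ 1 := by
    intro c₁ c₂ hc₂ hz
    rcases le_total 0 c₁ with hc₁ | hc₁
    · exact sector u w hu hw hwu (by simp [L]) c₁ c₂ hc₁ hc₂ hz
    rcases le_total 0 (c₁ + c₂) with hc | hc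
    · have e : (c₁ + c₂) • w + (-c₁) • (w - u) = c₁ • u + c₂ • w := by module
      rw [← e] at hz ⊢
      exact sector w (w - u) hw hwu (by simpa using hu) (by simp [L]) _ _ hc (by linarith) hz
    · have e : c₂ • (w - u) + (-(c₁ + c₂)) • (-u) = c₁ • u + c₂ • w := by module
      rw [← e] at hz ⊢
      exact sector (w - u) (-u) hwu (by simpa using hu)
        (by rw [show -u - (w - u) = -w by abel, map_neg_eq_map, hw]) (by simp [L]) _ _ hc₂
        (by linarith) hz
  obtain ⟨c₁, c₂, rfl⟩ :=
    Submodule.mem_span_pair.1 (hspan ▸ Submodule.mem_top : z ∈ Submodule.span ℝ {u, w})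
  rcases le_total 0 c₂ with hc₂ | hc₂
  · exact upper c₁ c₂ hc₂ hz
  · obtain ⟨p, hp, hle⟩ := upper (-c₁) (-c₂) (by linarith) (by
      rwa [show (-c₁) • u + (-c₂) • w = -(c₁ • u + c₂ • w) by module, map_neg_eq_map])
    refine ⟨-p, hneg p hp, ?_⟩
    rwa [show (2 : ℝ) • (c₁ • u + c₂ • w) - -p = -((2 : ℝ) • ((-c₁) • u + (-c₂) • w) - p) by
      module, map_neg_eq_map]

end Seminorm

theorem Seminorm.exists_inscribed_hexagon {E : Type*} [NormedAddCommGroup E] [NormedSpace ℝ E]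
    (hE : 1 < Module.rank ℝ E) (N : Seminorm ℝ E) (hN : Continuous N)
    (hdef : ∀ x, N x = 0 → x = 0) :
    ∃ u w : E, N u = 1 ∧ N w = 1 ∧ N (w - u) = 1 ∧ LinearIndependent ℝ ![w, u] := by
  have hsphere := isConnected_sphere hE (0 : E) zero_le_one
  obtain ⟨a, ha⟩ := hsphere.nonempty
  have hne : ∀ x ∈ Metric.sphere (0 : E) 1, N x ≠ 0 := fun x hx h => by
    simp [hdef x h] at hx
  set r : E → E := fun x => (N x)⁻¹ • x
  have hr : ∀ x, N x ≠ 0 → N (r x) = 1 := fun x hx => by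
    simp only [r, map_smul_eq_mul, norm_inv, Real.norm_of_nonneg (apply_nonneg N x),
      inv_mul_cancel₀ hx]
  set u := r a
  have hu : N u = 1 := hr a (hne a ha)
  have hcont : ContinuousOn (fun x => N (r x - u)) (Metric.sphere 0 1) :=
    hN.comp_continuousOn (((hN.continuousOn.inv₀ hne).smul continuousOn_id).sub continuousOn_const)
  obtain ⟨x, hx, hxu⟩ : ∃ x ∈ Metric.sphere (0 : E) 1, N (r x - u) = 1 := by
    refine hsphere.isPreconnected.intermediate_value ha (b := -a) (by simpa using ha) hcont ⟨?_, ?_⟩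
    · simp [u]
    · rw [show r (-a) - u = (-2 : ℝ) • u by simp [r, u, map_neg_eq_map]; module, map_smul_eq_mul,
        hu]
      norm_num
  refine ⟨u, r x, hu, hr x (hne x hx), hxu, linearIndependent_fin2.2 ⟨?_, fun c hc => ?_⟩⟩
  · intro h
    change u = 0 at h
    rw [h, map_zero] at hu
    exact zero_ne_one hu
  -- the only multiples of `u` on the unit sphere of `N` are `u` and `-u`
  · change c • u = r x at hc
    have h₁ := hr x (hne x hx)
    rw [← hc, map_smul_eq_mul, hu, mul_one, Real.norm_eq_abs] at h₁
    rw [← hc, show c • u - u = (c - 1) • u by module, map_smul_eq_mul, hu, mul_one,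
      Real.norm_eq_abs] at hxu
    rcases abs_cases c with ⟨h, _⟩ | ⟨h, _⟩ <;> rcases abs_cases (c - 1) with ⟨h', _⟩ | ⟨h', _⟩ <;>
      linarith

theorem Convex.zero_mem_interior_of_neg_mem {E : Type*} [AddCommGroup E] [Module ℝ E]
    [TopologicalSpace E] [IsTopologicalAddGroup E] [ContinuousConstSMul ℝ E] {C : Set E}
    (hconv : Convex ℝ C) (hneg : ∀ x ∈ C, -x ∈ C) (hint : (interior C).Nonempty) :
    (0 : E) ∈ interior C := by
  obtain ⟨x, hx⟩ := hint
  simpa using hconv.combo_interior_self_mem_interior hx (hneg x (interior_subset hx))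
    (a := 1 / 2) (b := 1 / 2) (by norm_num) (by norm_num) (by norm_num)

theorem exists_card_le_seven_two_smul_subset_iUnion_vadd {E : Type*} [NormedAddCommGroup E]
    [NormedSpace ℝ E] [FiniteDimensional ℝ E] (hE : Module.finrank ℝ E = 2) {C : Set E}
    (hcomp : IsCompact C) (hconv : Convex ℝ C) (hneg : ∀ x ∈ C, -x ∈ C)
    (h0 : (0 : E) ∈ interior C) :
    ∃ P : Finset E, P.card ≤ 7 ∧ (2 : ℝ) • C ⊆ ⋃ p ∈ P, p +ᵥ C := by
  have hnhds : C ∈ nhds (0 : E) := mem_interior_iff_mem_nhds.1 h0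
  have habs : Absorbent ℝ C := absorbent_nhds_zero hnhds
  set N := gaugeSeminorm ((balanced_iff_neg_mem hconv).2 hneg) hconv habs
  have hmem : ∀ x, N x ≤ 1 ↔ x ∈ C := fun x => by
    rw [gaugeSeminorm_toFun, gauge_le_one_iff_mem_closure hconv hnhds, hcomp.isClosed.closure_eq]
  have hdef : ∀ x, N x = 0 → x = 0 := fun x hx => by
    by_contra h
    exact ((gauge_pos habs ((NormedSpace.isVonNBounded_iff ℝ).2 hcomp.isBounded)).2 h).ne' hx
  have hrank : 1 < Module.rank ℝ E := by
    rw [← Module.finrank_eq_rank, hE]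
    norm_num
  obtain ⟨u, w, hu, hw, hwu, hind⟩ :=
    N.exists_inscribed_hexagon hrank (continuous_gauge hconv hnhds) hdef
  have hspan : Submodule.span ℝ {u, w} = ⊤ := by
    have := hind.span_eq_top_of_card_eq_finrank' (by simp [hE])
    rwa [Matrix.range_cons, Matrix.range_cons, Matrix.range_empty, union_empty, singleton_union,
      pair_comm] at this
  obtain ⟨P, hP, hcover⟩ := N.exists_card_le_seven_two_smul_sub_le_one hu hw hwu hspan
  refine ⟨P, hP, ?_⟩
  rintro _ ⟨z, hz, rfl⟩
  obtain ⟨p, hp, h⟩ := hcover z ((hmem z).2 hz)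
  exact mem_iUnion₂.2 ⟨p, hp, _, (hmem _).1 h, by simp [vadd_eq_add]⟩

section Homothets

variable {E : Type*} [AddCommGroup E] [Module ℝ E] {C : Set E}

theorem exists_mem_homothet_of_not_disjoint (hconv : Convex ℝ C) (hneg : ∀ x ∈ C, -x ∈ C)
    {P : Finset E} (hcover : (2 : ℝ) • C ⊆ ⋃ p ∈ P, p +ᵥ C) {μ lam : ℝ} (hμ : 0 < μ)
    (hμlam : μ ≤ lam) {v₀ v : E} (h : ¬Disjoint (v +ᵥ lam • C) (v₀ +ᵥ μ • C)) :
    ∃ p ∈ P, v₀ + μ • p ∈ v +ᵥ lam • C := by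
  have hlam : 0 < lam := hμ.trans_le hμlam
  obtain ⟨_, ⟨_, ⟨c₁, hc₁, rfl⟩, rfl⟩, _, ⟨c₀, hc₀, rfl⟩, hx⟩ := not_disjoint_iff.1 h
  have hdiff : c₀ - c₁ ∈ (2 : ℝ) • C :=
    ⟨(1 / 2 : ℝ) • c₀ + (1 / 2 : ℝ) • -c₁,
      hconv hc₀ (hneg c₁ hc₁) (by norm_num) (by norm_num) (by norm_num), by module⟩
  obtain ⟨p, hp, c, hc, hpc⟩ := mem_iUnion₂.1 (hcover hdiff)
  refine ⟨p, hp, lam • ((1 - μ / lam) • c₁ + (μ / lam) • -c), smul_mem_smul_set <|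
    hconv hc₁ (hneg c hc) (sub_nonneg.2 ((div_le_one hlam).2 hμlam)) (by positivity) (by ring), ?_⟩
  rw [smul_add, smul_smul, smul_smul, mul_sub, mul_one, mul_div_cancel₀ _ hlam.ne']
  simp only [vadd_eq_add] at hx hpc ⊢
  linear_combination (norm := module) -hx - μ • hpc

theorem exists_piercing_card_le_mul_of_two_smul_subset (hconv : Convex ℝ C)
    (hneg : ∀ x ∈ C, -x ∈ C) (hne : C.Nonempty) {k : ℕ} {P₀ : Finset E} (hP₀ : P₀.card ≤ k)
    (hcover : (2 : ℝ) • C ⊆ ⋃ p ∈ P₀, p +ᵥ C) (S : Finset (ℝ × E)) (hS : ∀ s ∈ S, 0 < s.1) :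
    ∃ (P : Finset E) (W : Finset (ℝ × E)), W ⊆ S ∧
      (∀ s ∈ S, ∃ x ∈ P, x ∈ s.2 +ᵥ s.1 • C) ∧
      (W : Set (ℝ × E)).Pairwise (fun s s' => Disjoint (s.2 +ᵥ s.1 • C) (s'.2 +ᵥ s'.1 • C)) ∧
      P.card ≤ k * W.card := by
  classical
  induction S using Finset.strongInduction with
  | H S ih =>
  rcases S.eq_empty_or_nonempty with rfl | hSne
  · exact ⟨∅, ∅, by simp⟩
  -- greedily keep a homothet `s₀` of least scale and recurse on those disjoint from it
  obtain ⟨s₀, hs₀, hmin⟩ := S.exists_min_image Prod.fst hSne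
  set T := S.filter fun s => Disjoint (s.2 +ᵥ s.1 • C) (s₀.2 +ᵥ s₀.1 • C)
  have hs₀T : s₀ ∉ T := fun h => by
    have := disjoint_self.1 (Finset.mem_filter.1 h).2
    exact hne.smul_set.vadd_set.ne_empty this
  have hTS : T ⊂ S := Finset.ssubset_iff_subset_ne.2
    ⟨Finset.filter_subset _ _, fun h => hs₀T (h ▸ hs₀)⟩
  obtain ⟨P, W, hWT, hPT, hW, hcard⟩ :=
    ih T hTS fun s hs => hS s (Finset.mem_filter.1 hs).1
  refine ⟨P ∪ P₀.image (s₀.2 + s₀.1 • ·), insert s₀ W,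
    Finset.insert_subset hs₀ (hWT.trans hTS.subset), fun s hs => ?_, ?_, ?_⟩
  · by_cases hd : Disjoint (s.2 +ᵥ s.1 • C) (s₀.2 +ᵥ s₀.1 • C)
    · obtain ⟨x, hx, hxs⟩ := hPT s (Finset.mem_filter.2 ⟨hs, hd⟩)
      exact ⟨x, Finset.mem_union_left _ hx, hxs⟩
    · obtain ⟨p, hp, hps⟩ :=
        exists_mem_homothet_of_not_disjoint hconv hneg hcover (hS s₀ hs₀) (hmin s hs) hd
      exact ⟨_, Finset.mem_union_right _ (Finset.mem_image_of_mem _ hp), hps⟩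
  · rw [Finset.coe_insert, pairwise_insert]
    exact ⟨hW, fun s hs _ =>
      ⟨(Finset.mem_filter.1 (hWT hs)).2.symm, (Finset.mem_filter.1 (hWT hs)).2⟩⟩
  · calc (P ∪ P₀.image (s₀.2 + s₀.1 • ·)).card ≤ P.card + P₀.card :=
          (Finset.card_union_le _ _).trans (add_le_add le_rfl Finset.card_image_le)
      _ ≤ k * W.card + k := add_le_add hcard hP₀
      _ = k * (insert s₀ W).card := by
          rw [Finset.card_insert_of_notMem fun h => hs₀T (hWT h), mul_add_one]

end Homothets

/-- For every centrally symmetric convex body `C` in the plane and every finite family of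
positive homothets of `C`, `τ(F) ≤ 7 · ν(F)`. -/
theorem piercing_homothets_symmetric_planar
    (C : Set (EuclideanSpace ℝ (Fin 2)))
    (hCcompact : IsCompact C) (hCconv : Convex ℝ C)
    (hCint : (interior C).Nonempty) (hCsymm : C = -C)
    (S : Finset (ℝ × EuclideanSpace ℝ (Fin 2)))
    (hS : ∀ s ∈ S, 0 < s.1) :
    ∃ (P : Finset (EuclideanSpace ℝ (Fin 2))) (W : Finset (ℝ × EuclideanSpace ℝ (Fin 2))),
      W ⊆ S ∧
      (∀ s ∈ S, ∃ x ∈ P, x ∈ s.2 +ᵥ s.1 • C) ∧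
      ((W : Set (ℝ × EuclideanSpace ℝ (Fin 2))).Pairwise fun s s' =>
        Disjoint (s.2 +ᵥ s.1 • C) (s'.2 +ᵥ s'.1 • C)) ∧
      P.card ≤ 7 * W.card := by
  have hneg : ∀ x ∈ C, -x ∈ C := fun x hx => by
    rw [hCsymm]
    exact neg_mem_neg.2 hx
  have h0 := hCconv.zero_mem_interior_of_neg_mem hneg hCint
  obtain ⟨P₀, hP₀, hcover⟩ := exists_card_le_seven_two_smul_subset_iUnion_vadd
    finrank_euclideanSpace_fin hCcompact hCconv hneg h0
  exact exists_piercing_card_le_mul_of_two_smul_subset hCconv hneg ⟨0, interior_subset h0⟩ hP₀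
    hcover S hS
end

section
/- Let C = [0,1]² be the unit square in the plane. For every nonempty finite family F of positive homothets of C (i.e., axis-parallel squares of arbitrary positive side lengths), τ(F) ≤ 4 · ν(F) − 3. -/
/-!
Greedy argument. Let `q` be a smallest square of the family. A square at least as large as `q`
that meets `q` contains a corner of `q`, so the four corners of `q` pierce every member meeting
`q`; put `q` into the packing and recurse on the members disjoint from `q`. When no member is
disjoint from `q`, either the remaining squares pairwise intersect and, by the Helly property of
axis-parallel boxes, one point pierces them all, or two of them are disjoint and the four corners
are paid for by a packing of size two. Either way the last round saves three points. The same
argument gives `τ ≤ 2ᵈ ν - (2ᵈ - 1)` for cubes in dimension `d`.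
-/

open Pointwise Finset Function

section Piercing

variable {α E : Type*}

/-- Witnesses `τ ≤ m ν - (m - 1)` for the family `(K s)_{s ∈ S}`: a transversal `P` and a packing
indexed by `W`. -/
def HasPiercingPackingBound (K : α → Set E) (S : Finset α) (m : ℕ) : Prop :=
  ∃ (P : Finset E) (W : Finset α), W ⊆ S ∧ (∀ s ∈ S, ∃ x ∈ P, x ∈ K s) ∧
    (W : Set α).Pairwise (Disjoint on K) ∧ P.card + m ≤ m * W.card + 1

variable {K : α → Set E} {S : Finset α} {m : ℕ}

theorem hasPiercingPackingBound_of_pierces (hS : S.Nonempty)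
    (hhelly : (S : Set α).Pairwise (fun s t => ¬Disjoint (K s) (K t)) → ∃ p, ∀ s ∈ S, p ∈ K s)
    {Q : Finset E} (hQ : Q.card ≤ m) (hQS : ∀ s ∈ S, ∃ x ∈ Q, x ∈ K s) :
    HasPiercingPackingBound K S m := by
  classical
  by_cases hpair : (S : Set α).Pairwise (fun s t => ¬Disjoint (K s) (K t))
  · obtain ⟨p, hp⟩ := hhelly hpair
    obtain ⟨s, hs⟩ := hS
    refine ⟨{p}, {s}, singleton_subset_iff.2 hs, fun t ht => ⟨p, mem_singleton_self p, hp t ht⟩,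
      by simp, by simp [add_comm]⟩
  · obtain ⟨s, hs, t, ht, hst, hdisj⟩ : ∃ s ∈ S, ∃ t ∈ S, s ≠ t ∧ Disjoint (K s) (K t) := by
      simpa [Set.Pairwise] using hpair
    refine ⟨Q, {s, t}, insert_subset hs (singleton_subset_iff.2 ht), hQS, ?_, ?_⟩
    · rw [coe_pair, Set.pairwise_pair]
      exact fun _ => ⟨hdisj, hdisj.symm⟩
    · rw [card_pair hst]
      omega

open Classical in
theorem HasPiercingPackingBound.insert_of_pierces_meeting {q : α} (hq : q ∈ S)
    (hKq : (K q).Nonempty) {Q : Finset E} (hQ : Q.card ≤ m)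
    (hQS : ∀ s ∈ S, ¬Disjoint (K s) (K q) → ∃ x ∈ Q, x ∈ K s)
    (h : HasPiercingPackingBound K {s ∈ S | Disjoint (K s) (K q)} m) :
    HasPiercingPackingBound K S m := by
  obtain ⟨P, W, hWS, hP, hW, hcard⟩ := h
  have hqW : q ∉ W := fun hqW => hKq.ne_empty (disjoint_self.1 (mem_filter.1 (hWS hqW)).2)
  refine ⟨Q ∪ P, insert q W, insert_subset hq (hWS.trans (filter_subset _ _)), ?_, ?_, ?_⟩
  · intro s hs
    by_cases hd : Disjoint (K s) (K q)
    · obtain ⟨x, hx, hxs⟩ := hP s (mem_filter.2 ⟨hs, hd⟩)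
      exact ⟨x, mem_union_right Q hx, hxs⟩
    · obtain ⟨x, hx, hxs⟩ := hQS s hs hd
      exact ⟨x, mem_union_left P hx, hxs⟩
  · rw [coe_insert, Set.pairwise_insert]
    refine ⟨hW, fun t ht _ => ?_⟩
    have hdt := (mem_filter.1 (hWS ht)).2
    exact ⟨hdt.symm, hdt⟩
  · rw [card_insert_of_notMem hqW, mul_add_one]
    linarith [card_union_le Q P]

theorem hasPiercingPackingBound_of_helly_of_local (hS : S.Nonempty)
    (hhelly : ∀ T ⊆ S, (T : Set α).Pairwise (fun s t => ¬Disjoint (K s) (K t)) →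
      ∃ p, ∀ s ∈ T, p ∈ K s)
    (hlocal : ∀ T ⊆ S, T.Nonempty → ∃ q ∈ T, ∃ Q : Finset E, Q.card ≤ m ∧
      ∀ s ∈ T, ¬Disjoint (K s) (K q) → ∃ x ∈ Q, x ∈ K s) :
    HasPiercingPackingBound K S m := by
  induction S using Finset.strongInduction with
  | H S ih =>
    classical
    obtain ⟨q, hq, Q, hQ, hQS⟩ := hlocal S subset_rfl hS
    have hKq : (K q).Nonempty := by
      obtain ⟨p, hp⟩ := hhelly {q} (singleton_subset_iff.2 hq) (by simp)
      exact ⟨p, hp q (mem_singleton_self q)⟩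
    set S' := {s ∈ S | Disjoint (K s) (K q)}
    by_cases hS' : S'.Nonempty
    · have hS'S : S' ⊆ S := filter_subset _ _
      have hqS' : q ∉ S' := fun h => hKq.ne_empty (disjoint_self.1 (mem_filter.1 h).2)
      refine (ih S' ((ssubset_iff_of_subset hS'S).2 ⟨q, hq, hqS'⟩) hS'
        (fun T hT => hhelly T (hT.trans hS'S)) (fun T hT => hlocal T (hT.trans hS'S))
        ).insert_of_pierces_meeting hq hKq hQ hQS
    · refine hasPiercingPackingBound_of_pierces hS (hhelly S subset_rfl) hQ fun s hs => ?_
      exact hQS s hs fun hd => hS' ⟨s, mem_filter.2 ⟨hs, hd⟩⟩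

end Piercing

section Cube

variable {ι : Type*}

def cube (v : EuclideanSpace ℝ ι) (r : ℝ) : Set (EuclideanSpace ℝ ι) :=
  {x | ∀ i, x i ∈ Set.Icc (v i) (v i + r)}

theorem vadd_smul_unitCube_eq_cube (v : EuclideanSpace ℝ ι) {r : ℝ} (hr : 0 < r) :
    v +ᵥ r • {x : EuclideanSpace ℝ ι | ∀ i, x i ∈ Set.Icc (0 : ℝ) 1} = cube v r := by
  ext x
  simp only [Set.mem_vadd_set, Set.mem_smul_set, Set.mem_ofPred_eq, cube, Set.mem_Icc]
  constructor
  · rintro ⟨_, ⟨y, hy, rfl⟩, rfl⟩ i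
    have := hy i
    simp only [vadd_eq_add, PiLp.add_apply, PiLp.smul_apply, smul_eq_mul]
    constructor <;> nlinarith
  · intro hx
    refine ⟨_, ⟨r⁻¹ • (x - v), fun i => ?_, rfl⟩, ?_⟩
    · have := hx i
      simp only [PiLp.smul_apply, PiLp.sub_apply, smul_eq_mul]
      constructor
      · exact mul_nonneg (inv_nonneg.2 hr.le) (by linarith)
      · rw [inv_mul_le_iff₀ hr]; linarith
    · rw [smul_inv_smul₀ hr.ne', vadd_eq_add, add_sub_cancel]

theorem exists_mem_cube_of_pairwise_not_disjoint {T : Finset (ℝ × EuclideanSpace ℝ ι)}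
    (hT : ∀ t ∈ T, 0 ≤ t.1)
    (hpair : (T : Set (ℝ × EuclideanSpace ℝ ι)).Pairwise fun s t =>
      ¬Disjoint (cube s.2 s.1) (cube t.2 t.1)) :
    ∃ p, ∀ t ∈ T, p ∈ cube t.2 t.1 := by
  rcases T.eq_empty_or_nonempty with rfl | hne
  · simp
  refine ⟨WithLp.toLp 2 fun i => T.sup' hne fun s => s.2 i, fun t ht i =>
    ⟨le_sup' (fun s => s.2 i) ht, sup'_le hne _ fun s hs => ?_⟩⟩
  obtain rfl | hst := eq_or_ne s t
  · linarith [hT s hs]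
  obtain ⟨x, hxs, hxt⟩ := Set.not_disjoint_iff.1 (hpair hs ht hst)
  exact (hxs i).1.trans (hxt i).2

variable [Fintype ι] [DecidableEq ι]

noncomputable def cubeCorners (v : EuclideanSpace ℝ ι) (r : ℝ) : Finset (EuclideanSpace ℝ ι) :=
  univ.image fun c : ι → Bool => WithLp.toLp 2 fun i => v i + if c i then r else 0

theorem card_cubeCorners_le (v : EuclideanSpace ℝ ι) (r : ℝ) :
    (cubeCorners v r).card ≤ 2 ^ Fintype.card ι :=
  card_image_le.trans (by simp)

theorem exists_mem_cubeCorners_mem_cube {u v : EuclideanSpace ℝ ι} {r s : ℝ} (hrs : r ≤ s)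
    (h : ¬Disjoint (cube u r) (cube v s)) : ∃ x ∈ cubeCorners u r, x ∈ cube v s := by
  obtain ⟨x, hxu, hxv⟩ := Set.not_disjoint_iff.1 h
  refine ⟨_, mem_image_of_mem _ (mem_univ fun i => decide (u i < v i)), fun i => ?_⟩
  have := hxu i; have := hxv i
  simp only [Set.mem_Icc] at *
  split_ifs with h <;> simp only [decide_eq_true_eq] at h <;> constructor <;> linarith

theorem hasPiercingPackingBound_cube {S : Finset (ℝ × EuclideanSpace ℝ ι)}
    (hS : ∀ s ∈ S, 0 ≤ s.1) (hne : S.Nonempty) :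
    HasPiercingPackingBound (fun s => cube s.2 s.1) S (2 ^ Fintype.card ι) := by
  refine hasPiercingPackingBound_of_helly_of_local hne
    (fun T hT => exists_mem_cube_of_pairwise_not_disjoint fun t ht => hS t (hT ht))
    fun T _ hT => ?_
  obtain ⟨q, hq, hmin⟩ := T.exists_min_image Prod.fst hT
  exact ⟨q, hq, cubeCorners q.2 q.1, card_cubeCorners_le _ _, fun s hs hsq =>
    exists_mem_cubeCorners_mem_cube (hmin s hs) fun h => hsq h.symm⟩

end Cube

/-- Let `C = [0,1]²` be the unit square in the plane. For every nonempty finite family of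
positive homothets of `C` (axis-parallel squares of arbitrary positive side lengths),
`τ(F) ≤ 4 · ν(F) − 3` (stated as `τ(F) + 3 ≤ 4 · ν(F)`). -/
theorem piercing_homothets_unit_square
    (C : Set (EuclideanSpace ℝ (Fin 2)))
    (hC : C = {x : EuclideanSpace ℝ (Fin 2) | ∀ i, x i ∈ Set.Icc (0 : ℝ) 1})
    (S : Finset (ℝ × EuclideanSpace ℝ (Fin 2)))
    (hS : ∀ s ∈ S, 0 < s.1) (hSne : S.Nonempty) :
    ∃ (P : Finset (EuclideanSpace ℝ (Fin 2))) (W : Finset (ℝ × EuclideanSpace ℝ (Fin 2))),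
      W ⊆ S ∧
      (∀ s ∈ S, ∃ x ∈ P, x ∈ s.2 +ᵥ s.1 • C) ∧
      ((W : Set (ℝ × EuclideanSpace ℝ (Fin 2))).Pairwise fun s s' =>
        Disjoint (s.2 +ᵥ s.1 • C) (s'.2 +ᵥ s'.1 • C)) ∧
      P.card + 3 ≤ 4 * W.card := by
  subst hC
  have hsq : ∀ s ∈ S, s.2 +ᵥ s.1 • {x : EuclideanSpace ℝ (Fin 2) | ∀ i, x i ∈ Set.Icc (0 : ℝ) 1} =
      cube s.2 s.1 := fun s hs => vadd_smul_unitCube_eq_cube s.2 (hS s hs)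
  obtain ⟨P, W, hWS, hP, hW, hcard⟩ := hasPiercingPackingBound_cube (fun s hs => (hS s hs).le) hSne
  refine ⟨P, W, hWS, fun s hs => hsq s hs ▸ hP s hs, fun s hs t ht hst => ?_, ?_⟩
  · show Disjoint _ _
    rw [hsq s (hWS hs), hsq t (hWS ht)]
    exact hW hs ht hst
  · simp only [Fintype.card_fin] at hcard
    omega
end
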